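/- arXiv:0711.1711 — 9 statements merged into one kernel-verified Lean document; each statement's English description precedes it below -/
import Mathlib

section
/- Let G be a graph with all vertex degrees at most d, and let o be a fixed vertex. Then the number of subsets S of vertices with |S| = n, o ∈ S, and S inducing a connected subgraph of G, is at most d^(2n). -/
/-!
A connected set `S ∋ o` of `n` vertices is the vertex set of a closed walk at `o` of length
`2 (n - 1)`, a depth-first traversal of a spanning tree crossing each tree edge twice. Distinct
sets come from distinct walks, and there are at most `d ^ L` walks of length `L` from `o`.
-/

open Finset

namespace SimpleGraph

variable {V : Type*} (G : SimpleGraph V)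

theorem card_finsetWalkLength_le_pow [DecidableEq V] [G.LocallyFinite] {d : ℕ}
    (hdeg : ∀ v, G.degree v ≤ d) (L : ℕ) (u v : V) : #(G.finsetWalkLength L u v) ≤ d ^ L := by
  induction L generalizing u with
  | zero =>
    unfold finsetWalkLength
    split_ifs with h
    · subst h; simp
    · simp
  | succ L ih =>
    calc #(G.finsetWalkLength (L + 1) u v)
        ≤ ∑ w : G.neighborSet u, #(G.finsetWalkLength L w v) := by
          rw [finsetWalkLength]
          exact card_biUnion_le.trans_eq (by simp only [card_map])
      _ ≤ ∑ _w : G.neighborSet u, d ^ L := sum_le_sum fun w _ => ih w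
      _ = G.degree u * d ^ L := by
          rw [sum_const, card_univ, card_neighborSet_eq_degree, smul_eq_mul]
      _ ≤ d ^ (L + 1) := by rw [pow_succ']; gcongr; exact hdeg u

variable {G}

theorem Walk.mem_support_map_induce_iff {s : Set V} {a b : s} {w : (G.induce s).Walk a b}
    (hw : ∀ y, y ∈ w.support) {x : V} :
    x ∈ (w.map (Embedding.induce s).toHom).support ↔ x ∈ s := by
  rw [Walk.support_map, List.mem_map]
  exact ⟨fun ⟨y, _, hy⟩ => hy ▸ y.2, fun hx => ⟨⟨x, hx⟩, hw _, rfl⟩⟩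

theorem Connected.exists_walk_length_eq_forall_mem_support {W : Type*} [Finite W]
    {H : SimpleGraph W} (hH : H.Connected) (u : W) :
    ∃ w : H.Walk u u, w.length = 2 * (Nat.card W - 1) ∧ ∀ v, v ∈ w.support := by
  classical
  induction hk : Nat.card W generalizing W with
  | zero =>
    have := hH.nonempty
    exact absurd hk Nat.card_pos.ne'
  | succ k ih =>
    rcases k.eq_zero_or_pos with rfl | hk0
    · have : Subsingleton W := Finite.card_le_one_iff_subsingleton.mp hk.le
      exact ⟨.nil, rfl, fun v => by simp [Subsingleton.elim v u]⟩
    have : Nontrivial W := Finite.one_lt_card_iff_nontrivial.mp (by omega)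
    -- Remove a vertex `v` keeping the graph connected, cover the rest from a neighbour `c` of `v`,
    -- then detour `c → v → c` and rotate the closed walk to start at `u`.
    obtain ⟨v, hv⟩ := hH.exists_connected_induce_compl_singleton_of_finite_nontrivial
    obtain ⟨c, hvc⟩ := hH.preconnected.exists_adj_of_nontrivial v
    have hcard : Nat.card ({v}ᶜ : Set W) = k := by
      rw [Nat.card_coe_set_eq, Set.ncard_compl, Set.ncard_singleton, hk, Nat.add_sub_cancel]
    obtain ⟨w, hlen, hcov⟩ := ih hv ⟨c, hvc.ne'⟩ hcard
    let w₀ : H.Walk c c := w.map (Embedding.induce _).toHom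
    have hlen₀ : w₀.length = 2 * (k - 1) := (Walk.length_map _ w).trans hlen
    let w' : H.Walk c c := .cons hvc.symm (.cons hvc w₀)
    have hcov' : ∀ x, x ∈ w'.support := by
      intro x
      by_cases hx : x = v
      · simp [w', hx]
      · simp only [w', Walk.support_cons, List.mem_cons]
        exact .inr (.inr ((Walk.mem_support_map_induce_iff hcov).2 hx))
    refine ⟨w'.rotate u (hcov' u), ?_, fun x => (w'.mem_support_rotate_iff u _).2 (hcov' x)⟩
    simp only [Walk.length_rotate, Walk.length_cons, w', hlen₀]
    omega

theorem exists_walk_length_eq_support_toFinset_eq [DecidableEq V] {S : Finset V} {o : V}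
    (ho : o ∈ S) (hS : (G.induce (S : Set V)).Connected) :
    ∃ w : G.Walk o o, w.length = 2 * (#S - 1) ∧ w.support.toFinset = S := by
  obtain ⟨w, hlen, hcov⟩ := hS.exists_walk_length_eq_forall_mem_support ⟨o, ho⟩
  refine ⟨w.map (Embedding.induce _).toHom, ?_, ?_⟩
  · rw [← Set.ncard_coe_finset, ← Nat.card_coe_set_eq, ← hlen]
    exact Walk.length_map _ w
  · ext x
    exact List.mem_toFinset.trans (Walk.mem_support_map_induce_iff hcov)

end SimpleGraph

open SimpleGraph

theorem stmt0_general {V : Type*} (G : SimpleGraph V)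
    [∀ v, Fintype (G.neighborSet v)] (d : ℕ) (hd : 1 ≤ d)
    (hdeg : ∀ v, G.degree v ≤ d) (o : V) (n : ℕ) :
    {S : Finset V | o ∈ S ∧ S.card = n ∧ (G.induce (S : Set V)).Connected}.Finite ∧
    {S : Finset V | o ∈ S ∧ S.card = n ∧ (G.induce (S : Set V)).Connected}.ncard
      ≤ d ^ (2 * n) := by
  classical
  set walks := G.finsetWalkLength (2 * (n - 1)) o o
  have hsub : {S : Finset V | o ∈ S ∧ S.card = n ∧ (G.induce (S : Set V)).Connected} ⊆
      ↑(walks.image fun w => w.support.toFinset) := by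
    rintro S ⟨ho, rfl, hS⟩
    obtain ⟨w, hlen, hsupp⟩ := exists_walk_length_eq_support_toFinset_eq ho hS
    exact mem_coe.2 (mem_image.2 ⟨w, mem_finsetWalkLength_iff.2 hlen, hsupp⟩)
  refine ⟨(finite_toSet _).subset hsub, ?_⟩
  calc _ ≤ #(walks.image fun w => w.support.toFinset) :=
        (Set.ncard_le_ncard hsub (finite_toSet _)).trans_eq (Set.ncard_coe_finset _)
    _ ≤ #walks := card_image_le
    _ ≤ d ^ (2 * (n - 1)) := G.card_finsetWalkLength_le_pow hdeg _ o o
    _ ≤ d ^ (2 * n) := Nat.pow_le_pow_right hd (by omega)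

/-- In a graph with all degrees at most `d`, the number of `n`-element
vertex sets containing `o` that induce a connected subgraph is at most `d ^ (2 n)`. -/
theorem stmt0 {V : Type*} (G : SimpleGraph V)
    [∀ v, Fintype (G.neighborSet v)] (d : ℕ) (hd : 1 ≤ d)
    (hdeg : ∀ v, G.degree v ≤ d) (o : V) (n : ℕ) (hn : 0 < n) :
    {S : Finset V | o ∈ S ∧ S.card = n ∧ (G.induce (S : Set V)).Connected}.Finite ∧
    {S : Finset V | o ∈ S ∧ S.card = n ∧ (G.induce (S : Set V)).Connected}.ncard
      ≤ d ^ (2 * n) :=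
  stmt0_general G d hd hdeg o n
end

section
/- Let G be a locally finite connected graph, X a finite set of vertices, and Π a minimal edge cutset separating X from infinity (i.e., Π is minimal among edge sets whose removal leaves no infinite path from X). Then every connected component of G \ X obtained after deleting Π that does not contain X is infinite; equivalently, for any vertex v in the external boundary of the component of X, there is an infinite path starting at v meeting that component only in v. -/
/-- `f` is an infinite (injective) ray in `G`. -/
def IsRay {V : Type*} (G : SimpleGraph V) (f : ℕ → V) : Prop :=
  Function.Injective f ∧ ∀ n, G.Adj (f n) (f (n + 1))

/-- The edge set `P` separates the vertex set `X` from infinity: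
every infinite ray starting in `X` uses an edge of `P`. -/
def SepInf {V : Type*} (G : SimpleGraph V) (X : Set V) (P : Set (Sym2 V)) : Prop :=
  ∀ f : ℕ → V, IsRay G f → f 0 ∈ X → ∃ n, s(f n, f (n + 1)) ∈ P

/-!
Let `C` be the component of `v` in `G - P`, which avoids the component of `X`. Since `G` is
connected, some edge `ab ∈ P` leaves `C` at `a ∈ C`. By minimality `P \ {ab}` does not separate
`X` from infinity, so some ray from `X` uses no edge of `P` other than `ab`, and it must use
`ab`. Up to its first `P`-edge the ray stays in the component of `X`, so it crosses `ab` from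
`b` to `a` and from then on runs through `C` without using `P` again: `C` is infinite.
-/

namespace SimpleGraph

variable {V : Type*}

lemma reachable_of_forall_lt_adj {G : SimpleGraph V} (f : ℕ → V) :
    ∀ n, (∀ m < n, G.Adj (f m) (f (m + 1))) → G.Reachable (f 0) (f n)
  | 0, _ => .refl _
  | n + 1, h =>
    (reachable_of_forall_lt_adj f n fun m hm => h m (by omega)).trans (h n n.lt_succ_self).reachable

lemma infinite_setOf_reachable_of_forall_adj {G : SimpleGraph V} {f : ℕ → V}
    (hf : Function.Injective f) (hadj : ∀ m, G.Adj (f m) (f (m + 1))) :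
    {w | G.Reachable (f 0) w}.Infinite :=
  Set.infinite_of_injective_forall_mem hf fun n =>
    reachable_of_forall_lt_adj f n fun m _ => hadj m

lemma exists_mem_reachable_deleteEdges_of_reachable {G : SimpleGraph V} {P : Set (Sym2 V)}
    {v x : V} (hvx : G.Reachable v x) (hnot : ¬ (G.deleteEdges P).Reachable v x) :
    ∃ a b, s(a, b) ∈ P ∧ (G.deleteEdges P).Reachable v a := by
  obtain ⟨p⟩ := hvx
  obtain ⟨d, -, hd, hd'⟩ :=
    p.exists_boundary_dart {w | (G.deleteEdges P).Reachable v w} (.refl _) hnot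
  refine ⟨d.fst, d.snd, ?_, hd⟩
  by_contra hP
  exact hd' (hd.trans (deleteEdges_adj.2 ⟨d.adj, hP⟩).reachable)

end SimpleGraph

open SimpleGraph

lemma Function.Injective.sym2_mk_succ {V : Type*} {f : ℕ → V} (hf : Function.Injective f) :
    Function.Injective fun n => s(f n, f (n + 1)) := by
  intro k n h
  rcases Sym2.eq_iff.1 h with ⟨h1, -⟩ | ⟨h1, h2⟩
  · exact hf h1
  · have := hf h1
    have := hf h2
    omega

namespace IsRay

variable {V : Type*} {G : SimpleGraph V} {f : ℕ → V}

lemma reachable_deleteEdges_of_lt_find {P : Set (Sym2 V)} [DecidablePred (· ∈ P)]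
    (hf : IsRay G f) (h : ∃ n, s(f n, f (n + 1)) ∈ P) :
    (G.deleteEdges P).Reachable (f 0) (f (Nat.find h)) :=
  reachable_of_forall_lt_adj f _ fun _ hm => deleteEdges_adj.2 ⟨hf.2 _, Nat.find_min h hm⟩

lemma infinite_setOf_reachable_deleteEdges {P : Set (Sym2 V)} (hf : IsRay G f) (n : ℕ)
    (hP : ∀ k, s(f (n + k), f (n + k + 1)) ∉ P) :
    {w | (G.deleteEdges P).Reachable (f n) w}.Infinite :=
  infinite_setOf_reachable_of_forall_adj (f := fun k => f (n + k))
    (hf.1.comp fun _ _ h => by omega) fun k => deleteEdges_adj.2 ⟨hf.2 _, hP k⟩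

end IsRay

lemma exists_ray_edges_mem_eq_of_minimal {V : Type*} {G : SimpleGraph V} {X : Set V}
    {P : Set (Sym2 V)} (hmin : ∀ Q ⊂ P, ¬ SepInf G X Q) {e : Sym2 V} (he : e ∈ P) :
    ∃ f, IsRay G f ∧ f 0 ∈ X ∧ ∀ n, s(f n, f (n + 1)) ∈ P → s(f n, f (n + 1)) = e := by
  have := hmin _ (Set.sdiff_singleton_ssubset.2 he)
  simp only [SepInf, not_forall, not_exists] at this
  obtain ⟨f, hf, hf0, hfe⟩ := this
  exact ⟨f, hf, hf0, fun n hn => by simpa [hn] using hfe n⟩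

theorem stmt1_general {V : Type*} (G : SimpleGraph V)
    (hconn : G.Connected)
    (X : Set V) (hXne : X.Nonempty)
    (P : Set (Sym2 V))
    (hsep : SepInf G X P) (hmin : ∀ Q ⊂ P, ¬ SepInf G X Q) :
    ∀ v : V, (∀ x ∈ X, ¬ (G.deleteEdges P).Reachable v x) →
      {w | (G.deleteEdges P).Reachable v w}.Infinite := by
  classical
  intro v hv
  obtain ⟨x, hx⟩ := hXne
  obtain ⟨a, b, hab, hva⟩ := exists_mem_reachable_deleteEdges_of_reachable (hconn v x) (hv x hx)
  obtain ⟨f, hf, hf0, hfe⟩ := exists_ray_edges_mem_eq_of_minimal hmin hab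
  have hcut := hsep f hf hf0
  set n := Nat.find hcut
  have hn : s(f n, f (n + 1)) = s(a, b) := hfe n (Nat.find_spec hcut)
  have hXn := hf.reachable_deleteEdges_of_lt_find hcut
  obtain ⟨-, ha⟩ : f n = b ∧ f (n + 1) = a := by
    rcases Sym2.eq_iff.1 hn with ⟨hna, -⟩ | h
    · exact absurd (hva.trans (hna ▸ hXn).symm) (hv _ hf0)
    · exact h
  have htail : ∀ k, s(f (n + 1 + k), f (n + 1 + k + 1)) ∉ P := fun k hk =>
    absurd (hf.1.sym2_mk_succ ((hfe _ hk).trans hn.symm)) (by omega)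
  have := hf.infinite_setOf_reachable_deleteEdges (n + 1) htail
  rw [ha] at this
  exact this.mono fun w hw => hva.trans hw

/-- if `P` is a minimal edge cutset separating the finite vertex set `X`
from infinity, then every connected component of `G` minus `P` that contains no vertex
of `X` is infinite. -/
theorem stmt1 {V : Type*} (G : SimpleGraph V) [∀ v, Fintype (G.neighborSet v)]
    (hconn : G.Connected) (hinf : Infinite V)
    (X : Set V) (hX : X.Finite) (hXne : X.Nonempty)
    (P : Set (Sym2 V)) (hPe : P ⊆ G.edgeSet)
    (hsep : SepInf G X P) (hmin : ∀ Q ⊂ P, ¬ SepInf G X Q) :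
    ∀ v : V, (∀ x ∈ X, ¬ (G.deleteEdges P).Reachable v x) →
      {w | (G.deleteEdges P).Reachable v w}.Infinite :=
  stmt1_general G hconn X hXne P hsep hmin
end

section
/- Let G and G' be graphs with degrees bounded by d, and let ι : V(G) → V(G') be a bijection such that (1/m)·dist_G(x,y) ≤ dist_{G'}(ι(x),ι(y)) ≤ m·dist_G(x,y) for all x,y. If K is a finite connected subgraph of G, then the m-neighborhood N_m(ι(K)) of the image ι(K) in G' is connected. -/
private lemma reach_of_walk {V' : Type*} {G' : SimpleGraph V'} {S : Set V'}
    {x y : V'} (p : G'.Walk x y) (hp : ∀ v ∈ p.support, v ∈ S) :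
    ∀ (hx : x ∈ S) (hy : y ∈ S),
      (G'.induce S).Reachable ⟨x, hx⟩ ⟨y, hy⟩ := by
  induction p with
  | nil => intro hx hy; rfl
  | cons h q ih =>
    intro hx hy
    rename_i a b c
    have hb : b ∈ S := hp b (by simp)
    have hadj : (G'.induce S).Adj ⟨a, hx⟩ ⟨b, hb⟩ := h
    exact (hadj.reachable).trans (ih (fun v hv => hp v (by simp [hv])) hb hy)

/-- if `ι` is a bijective quasi-isometry with constant `m` between bounded
degree connected graphs `G` and `G'`, and `K` is a finite connected (induced) subgraph of
`G`, then the `m`-neighborhood of `ι '' K` in `G'` is connected. -/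
theorem stmt2 {V V' : Type*} (G : SimpleGraph V) (G' : SimpleGraph V')
    (hc : G.Connected) (hc' : G'.Connected)
    [∀ v, Fintype (G.neighborSet v)] [∀ v, Fintype (G'.neighborSet v)]
    (d m : ℕ) (hm : 1 ≤ m)
    (hdeg : ∀ v, G.degree v ≤ d) (hdeg' : ∀ v, G'.degree v ≤ d)
    (ι : V → V') (hbij : Function.Bijective ι)
    (hqi : ∀ x y : V, G.dist x y ≤ m * G'.dist (ι x) (ι y) ∧
      G'.dist (ι x) (ι y) ≤ m * G.dist x y)
    (K : Set V) (hK : K.Finite) (hKne : K.Nonempty)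
    (hKconn : (G.induce K).Connected) :
    (G'.induce {v' : V' | ∃ u ∈ K, G'.dist (ι u) v' ≤ m}).Connected := by
  classical
  set S : Set V' := {v' : V' | ∃ u ∈ K, G'.dist (ι u) v' ≤ m} with hS
  have hmem : ∀ u ∈ K, ι u ∈ S :=
    fun u hu => ⟨u, hu, by rw [SimpleGraph.dist_self]; omega⟩
  -- ball lemma
  have hball : ∀ u, ∀ hu : u ∈ K, ∀ v', G'.dist (ι u) v' ≤ m → ∀ hv' : v' ∈ S,
      (G'.induce S).Reachable ⟨ι u, hmem u hu⟩ ⟨v', hv'⟩ := by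
    intro u hu v' h hv'
    obtain ⟨p, hp⟩ := (hc' (ι u) v').exists_walk_length_eq_dist
    refine reach_of_walk p ?_ _ _
    intro w hw
    refine ⟨u, hu, ?_⟩
    calc G'.dist (ι u) w ≤ (p.takeUntil w hw).length := SimpleGraph.dist_le _
      _ ≤ p.length := SimpleGraph.Walk.length_takeUntil_le p hw
      _ ≤ m := by omega
  -- images of K are mutually reachable
  have himg : ∀ (a b : {x // x ∈ K}),
      (G'.induce S).Reachable ⟨ι a.1, hmem a.1 a.2⟩ ⟨ι b.1, hmem b.1 b.2⟩ := by
    intro a b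
    obtain ⟨q⟩ := hKconn a b
    induction q with
    | nil => rfl
    | cons h q ih =>
      rename_i x y z
      have hadj : G.Adj x.1 y.1 := h
      have hd : G.dist x.1 y.1 = 1 := SimpleGraph.dist_eq_one_iff_adj.mpr hadj
      have hdm : G'.dist (ι x.1) (ι y.1) ≤ m := by
        have h2 := (hqi x.1 y.1).2
        rwa [hd, mul_one] at h2
      exact (hball x.1 x.2 (ι y.1) hdm (hmem y.1 y.2)).trans ih
  obtain ⟨u0, hu0⟩ := hKne
  rw [SimpleGraph.connected_iff]
  refine ⟨?_, ⟨⟨ι u0, hmem u0 hu0⟩⟩⟩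
  rintro ⟨x, ux, hux, hdx⟩ ⟨y, uy, huy, hdy⟩
  have h1 := hball ux hux x hdx ⟨ux, hux, hdx⟩
  have h2 := hball uy huy y hdy ⟨uy, huy, hdy⟩
  have h3 := himg ⟨ux, hux⟩ ⟨uy, huy⟩
  exact (h1.symm.trans h3).trans h2
end

section
/- Let G and G' be bounded-degree graphs (degrees at most d) and ι : V(G) → V(G') a bijective quasi-isometry with constant m. For any finite vertex set K in G with external boundary ∂K, the external boundary of the image satisfies |∂(ι(K))| ≤ d^m · |∂K|. -/
/-!
A boundary vertex `ι v` of `ι '' K` is adjacent to some `ι u` with `u ∈ K`, so `dist u v ≤ m`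
in `G`. Walking from `v` towards `u` along a geodesic, the last vertex before the walk first
enters `K` is a boundary vertex `w ∈ ∂K`, reached from `v` in fewer than `m` steps outside `K`.
Since `w` has a neighbour in `K`, at most `d ^ m` vertices are reached from `w` in this way.
-/

/-- The external vertex boundary of `A`: vertices outside `A` adjacent to some vertex
of `A`. -/
def extBoundary {V : Type*} (G : SimpleGraph V) (A : Set V) : Set V :=
  {v | v ∉ A ∧ ∃ u ∈ A, G.Adj u v}

open SimpleGraph Finset

section

variable {V : Type*} {G : SimpleGraph V}

lemma extBoundary_finite [∀ v, Fintype (G.neighborSet v)] {K : Set V} (hK : K.Finite) :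
    (extBoundary G K).Finite :=
  (hK.biUnion fun u _ => (G.neighborSet u).toFinite).subset
    fun _ ⟨_, _, hu, h⟩ => Set.mem_biUnion hu h

lemma SimpleGraph.Walk.exists_walk_to_extBoundary {K : Set V} {u v : V} (p : G.Walk v u)
    (hu : u ∈ K) (hv : v ∉ K) :
    ∃ w ∈ extBoundary G K, ∃ r : G.Walk v w,
      r.length < p.length ∧ ∀ x ∈ r.support, x ∉ K := by
  induction p with
  | nil => exact absurd hu hv
  | @cons v x u h q ih =>
    by_cases hx : x ∈ K
    · exact ⟨v, ⟨hv, x, hx, h.symm⟩, nil, by simp, by simpa⟩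
    · obtain ⟨w, hw, r, hlen, hr⟩ := ih hu hx
      exact ⟨w, hw, cons h r, by simpa using hlen, by simpa [hv] using hr⟩

variable [∀ v, Fintype (G.neighborSet v)] [DecidableEq V]

variable (G) in
def ballAvoiding (K : Set V) [DecidablePred (· ∈ K)] (w : V) : ℕ → Finset V
  | 0 => {w}
  | n + 1 => insert w ((ballAvoiding K w n).biUnion fun x => {y ∈ G.neighborFinset x | y ∉ K})

variable {K : Set V} [DecidablePred (· ∈ K)]

lemma self_mem_ballAvoiding (w : V) : ∀ n, w ∈ ballAvoiding G K w n
  | 0 => mem_singleton_self w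
  | _ + 1 => mem_insert_self _ _

lemma mem_ballAvoiding_of_walk {v w : V} (r : G.Walk v w) (hr : ∀ x ∈ r.support, x ∉ K)
    {n : ℕ} (hn : r.length ≤ n) : v ∈ ballAvoiding G K w n := by
  induction r generalizing n with
  | nil => exact self_mem_ballAvoiding _ n
  | @cons v x w h q ih =>
    obtain ⟨n, rfl⟩ : ∃ k, n = k + 1 := Nat.exists_eq_add_one.2 (by simp at hn; omega)
    simp only [Walk.support_cons, List.mem_cons, forall_eq_or_imp] at hr
    refine mem_insert_of_mem (mem_biUnion.2 ⟨x, ih hr.2 (by simpa using hn), ?_⟩)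
    exact mem_filter.2 ⟨(G.mem_neighborFinset _ _).2 h.symm, hr.1⟩

lemma card_ballAvoiding_le {d : ℕ} (hdeg : ∀ v, G.degree v ≤ d) {k w : V} (hk : k ∈ K)
    (hkw : G.Adj k w) (n : ℕ) : #(ballAvoiding G K w n) ≤ d ^ n := by
  induction n with
  | zero => simp [ballAvoiding]
  | succ n ih =>
    set B := ballAvoiding G K w n
    have hstep : ∀ x, #{y ∈ G.neighborFinset x | y ∉ K} ≤ d := fun x =>
      (card_filter_le _ _).trans ((card_neighborFinset_eq_degree G x).trans_le (hdeg x))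
    -- The neighbour `k ∈ K` of `w` is never entered, which pays for counting `w` itself.
    have hw : #{y ∈ G.neighborFinset w | y ∉ K} < d := by
      refine (card_lt_card (filter_ssubset.2 ⟨k, ?_, not_not.2 hk⟩)).trans_le ?_
      · exact (G.mem_neighborFinset _ _).2 hkw.symm
      · exact (card_neighborFinset_eq_degree G w).trans_le (hdeg w)
    calc #(ballAvoiding G K w (n + 1))
        ≤ ∑ x ∈ B, #{y ∈ G.neighborFinset x | y ∉ K} + 1 :=
          (card_insert_le _ _).trans (Nat.add_le_add_right card_biUnion_le 1)
      _ ≤ ∑ _ ∈ B, d :=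
          sum_lt_sum (fun x _ => hstep x) ⟨w, self_mem_ballAvoiding w n, hw⟩
      _ = #B * d := sum_const_nat fun _ _ => rfl
      _ ≤ d ^ (n + 1) := by rw [pow_succ]; exact Nat.mul_le_mul_right d ih

lemma exists_mem_image_ballAvoiding_of_mem_extBoundary_image {V' : Type*}
    [DecidableEq V'] {G' : SimpleGraph V'} (hc : G.Connected) {m : ℕ} {ι : V → V'}
    (hsurj : Function.Surjective ι) (hdist : ∀ x y, G.dist x y ≤ m * G'.dist (ι x) (ι y))
    {v' : V'} (hv' : v' ∈ extBoundary G' (ι '' K)) :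
    ∃ w ∈ extBoundary G K, v' ∈ (ballAvoiding G K w m).image ι := by
  obtain ⟨hv'K, _, ⟨u, hu, rfl⟩, hadj⟩ := hv'
  obtain ⟨v, rfl⟩ := hsurj v'
  have hvu : G.dist v u ≤ m := by
    simpa [G'.dist_comm, dist_eq_one_iff_adj.2 hadj] using hdist v u
  obtain ⟨p, hp⟩ := (hc v u).exists_walk_length_eq_dist
  obtain ⟨w, hw, r, hlen, hr⟩ := p.exists_walk_to_extBoundary hu fun h => hv'K ⟨v, h, rfl⟩
  exact ⟨w, hw, mem_image_of_mem ι (mem_ballAvoiding_of_walk r hr (by omega))⟩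

end

theorem stmt3_general {V V' : Type*} (G : SimpleGraph V) (G' : SimpleGraph V')
    (hc : G.Connected)
    [∀ v, Fintype (G.neighborSet v)]
    (d m : ℕ)
    (hdeg : ∀ v, G.degree v ≤ d)
    (ι : V → V') (hbij : Function.Bijective ι)
    (hqi : ∀ x y : V, G.dist x y ≤ m * G'.dist (ι x) (ι y) ∧
      G'.dist (ι x) (ι y) ≤ m * G.dist x y)
    (K : Set V) (hK : K.Finite) :
    (extBoundary G' (ι '' K)).Finite ∧
    (extBoundary G' (ι '' K)).ncard ≤ d ^ m * (extBoundary G K).ncard := by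
  classical
  have hfin := extBoundary_finite (G := G) hK
  set T := hfin.toFinset.biUnion fun w => (ballAvoiding G K w m).image ι
  have hsub : extBoundary G' (ι '' K) ⊆ T := fun v' hv' => by
    obtain ⟨w, hw, hv'w⟩ := exists_mem_image_ballAvoiding_of_mem_extBoundary_image hc hbij.2
      (fun x y => (hqi x y).1) hv'
    exact mem_coe.2 (mem_biUnion.2 ⟨w, hfin.mem_toFinset.2 hw, hv'w⟩)
  refine ⟨T.finite_toSet.subset hsub, ?_⟩
  calc (extBoundary G' (ι '' K)).ncard
      ≤ #T := (Set.ncard_le_ncard hsub T.finite_toSet).trans (Set.ncard_coe_finset T).le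
    _ ≤ #hfin.toFinset * d ^ m := card_biUnion_le_card_mul _ _ _ fun w hw => by
        obtain ⟨-, k, hk, hkw⟩ := hfin.mem_toFinset.1 hw
        exact card_image_le.trans (card_ballAvoiding_le hdeg hk hkw m)
    _ = d ^ m * (extBoundary G K).ncard := by rw [Set.ncard_eq_toFinset_card _ hfin, mul_comm]

/-- if `ι` is a bijective quasi-isometry with constant `m` between bounded
degree graphs `G` and `G'`, then for a finite vertex set `K` of `G`,
`|∂(ι '' K)| ≤ d ^ m * |∂ K|`. -/
theorem stmt3 {V V' : Type*} (G : SimpleGraph V) (G' : SimpleGraph V')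
    (hc : G.Connected) (hc' : G'.Connected)
    [∀ v, Fintype (G.neighborSet v)] [∀ v, Fintype (G'.neighborSet v)]
    (d m : ℕ) (hm : 1 ≤ m)
    (hdeg : ∀ v, G.degree v ≤ d) (hdeg' : ∀ v, G'.degree v ≤ d)
    (ι : V → V') (hbij : Function.Bijective ι)
    (hqi : ∀ x y : V, G.dist x y ≤ m * G'.dist (ι x) (ι y) ∧
      G'.dist (ι x) (ι y) ≤ m * G.dist x y)
    (K : Set V) (hK : K.Finite) :
    (extBoundary G' (ι '' K)).Finite ∧
    (extBoundary G' (ι '' K)).ncard ≤ d ^ m * (extBoundary G K).ncard :=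
  stmt3_general G G' hc d m hdeg ι hbij hqi K hK
end

section
/- Let G be a graph in which every cycle is generated (as a mod-2 sum of edge sets) by a set K of cycles, each of length at most t. Let Π be a minimal edge cutset separating a vertex x from a vertex y (or from infinity). Then for every partition Π = Π₁ ∪ Π₂ into two nonempty parts, there exist endpoints x₁ of an edge in Π₁ and x₂ of an edge in Π₂ with dist(x₁, x₂) ≤ t/2. -/
/-- Indicator vector (over `ℤ/2`) of a finite edge set. -/
def eInd {V : Type*} [DecidableEq V] (E : Finset (Sym2 V)) : Sym2 V → ZMod 2 :=
  fun e => if e ∈ E then 1 else 0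

/-- `C` is the edge set of a cycle of `G`. -/
def IsCycleEdgeSet {V : Type*} [DecidableEq V] (G : SimpleGraph V)
    (C : Finset (Sym2 V)) : Prop :=
  ∃ (v : V) (w : G.Walk v v), w.IsCycle ∧ w.edges.toFinset = C

/-- `C` is a mod-2 sum of finitely many members of `K`. -/
def GenBy {V : Type*} [DecidableEq V] (K : Set (Finset (Sym2 V)))
    (C : Finset (Sym2 V)) : Prop :=
  ∃ s : Finset (Finset (Sym2 V)), (s : Set (Finset (Sym2 V))) ⊆ K ∧
    ∀ e : Sym2 V, eInd C e = ∑ D ∈ s, eInd D e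

/-!
Let `X` be the set of vertices reachable from `x` without using `Π`. Minimality of `Π` forces
`Π` to be exactly the set of edges with one end in `X`, so every closed walk crosses `Π` an even
number of times. Choose an `x`–`y` path avoiding `Π₂` and one avoiding `Π₁`; the closed walk they
form crosses `Π₁` an odd number of times. Its edge parity vector lies in the cycle space, which
is spanned by `K`, so some cycle `D ∈ K` meets `Π₁` in an odd number of edges; being closed,
`D` then also meets `Π₂`. Two vertices on a cycle of length at most `t` are at distance at most
`t / 2`.
-/

open Finset Submodule SimpleGraph

theorem Submodule.exists_apply_ne_zero_of_mem_span {R M N ι : Type*} [Semiring R]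
    [AddCommMonoid M] [Module R M] [AddCommMonoid N] [Module R N] (L : M →ₗ[R] N) {g : ι → M}
    {K : Set ι} {f : M} (hf : f ∈ span R (g '' K)) (hLf : L f ≠ 0) : ∃ D ∈ K, L (g D) ≠ 0 := by
  by_contra! h
  exact hLf <| span_le (p := LinearMap.ker L) |>.2 (by rintro _ ⟨D, hD, rfl⟩; exact h D hD) hf

namespace SimpleGraph

variable {V : Type*} {G : SimpleGraph V}

def edgeSum (S : Finset (Sym2 V)) : (Sym2 V → ZMod 2) →ₗ[ZMod 2] ZMod 2 :=
  ∑ e ∈ S, LinearMap.proj e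

lemma edgeSum_apply (S : Finset (Sym2 V)) (f : Sym2 V → ZMod 2) :
    edgeSum S f = ∑ e ∈ S, f e := by
  simp [edgeSum]

lemma Walk.sum_map_edges_eq_add {φ : V → ZMod 2} {χ : Sym2 V → ZMod 2}
    (hχ : ∀ a b, G.Adj a b → χ s(a, b) = φ a + φ b) {u v : V} (w : G.Walk u v) :
    (w.edges.map χ).sum = φ u + φ v := by
  induction w with
  | nil => simp [ZModModule.add_self]
  | cons h w ih =>
    rw [edges_cons, List.map_cons, List.sum_cons, ih, hχ _ _ h, ZModModule.add_add_add_cancel]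

lemma not_reachable_deleteEdges_of_forall_walk {x y : V} {P : Finset (Sym2 V)}
    (hsep : ∀ p : G.Walk x y, ∃ e ∈ p.edges, e ∈ P) : ¬(G.deleteEdges P).Reachable x y := by
  rintro ⟨q⟩
  obtain ⟨e, he, heP⟩ := hsep (q.mapLe (deleteEdges_le _))
  rw [Walk.edges_mapLe_eq_edges] at he
  exact (edgeSet_deleteEdges (G := G) _ ▸ q.edges_subset_edgeSet he).2 heP

variable [DecidableEq V]

lemma eInd_eq_sum_single (D : Finset (Sym2 V)) : eInd D = ∑ e ∈ D, Pi.single e 1 := by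
  ext e
  simp [eInd, Finset.sum_apply, Pi.single_apply]

lemma eInd_mem_span_of_genBy {K : Set (Finset (Sym2 V))} {C : Finset (Sym2 V)}
    (h : GenBy K C) : eInd C ∈ span (ZMod 2) (eInd '' K) := by
  obtain ⟨s, hsK, hs⟩ := h
  rw [show eInd C = ∑ D ∈ s, eInd D from funext fun e => by simp [hs e]]
  exact sum_mem fun D hD => subset_span ⟨D, hsK hD, rfl⟩

variable (G) in
def cycleSpace : Submodule (ZMod 2) (Sym2 V → ZMod 2) :=
  span (ZMod 2) (eInd '' {C | IsCycleEdgeSet G C})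

lemma cycleSpace_le_span {K : Set (Finset (Sym2 V))}
    (hgen : ∀ C, IsCycleEdgeSet G C → GenBy K C) : G.cycleSpace ≤ span (ZMod 2) (eInd '' K) :=
  span_le.2 <| by rintro _ ⟨C, hC, rfl⟩; exact eInd_mem_span_of_genBy (hgen C hC)

namespace Walk

def edgeParity {u v : V} (w : G.Walk u v) : Sym2 V → ZMod 2 :=
  (w.edges.map fun e => Pi.single e 1).sum

@[simp] lemma edgeParity_nil {u : V} : (nil : G.Walk u u).edgeParity = 0 := rfl

@[simp] lemma edgeParity_cons {u v w : V} (h : G.Adj u v) (p : G.Walk v w) :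
    (cons h p).edgeParity = Pi.single s(u, v) 1 + p.edgeParity := by
  simp [edgeParity]

@[simp] lemma edgeParity_append {u v w : V} (p : G.Walk u v) (q : G.Walk v w) :
    (p.append q).edgeParity = p.edgeParity + q.edgeParity := by
  simp [edgeParity]

@[simp] lemma edgeParity_reverse {u v : V} (p : G.Walk u v) :
    p.reverse.edgeParity = p.edgeParity := by
  simp [edgeParity, List.sum_reverse]

lemma IsCycle.edgeParity_eq {v : V} {c : G.Walk v v} (hc : c.IsCycle) :
    c.edgeParity = eInd c.edges.toFinset := by
  rw [eInd_eq_sum_single, List.sum_toFinset _ hc.edges_nodup, edgeParity]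

lemma edgeParity_cons_mem_cycleSpace {u v : V} (h : G.Adj u v) {p : G.Walk v u}
    (hp : p.IsPath) : (cons h p).edgeParity ∈ G.cycleSpace := by
  by_cases he : s(u, v) ∈ p.edges
  · rw [hp.eq_adj_toWalk_of_mem_edges (Sym2.eq_swap ▸ he)]
    simp [Adj.toWalk, Sym2.eq_swap, ZModModule.add_self]
  · have hc := (cons_isCycle_iff p h).2 ⟨hp, he⟩
    rw [hc.edgeParity_eq]
    exact subset_span ⟨_, ⟨u, _, hc, rfl⟩, rfl⟩

lemma exists_isPath_edgeParity_add_mem_cycleSpace {u v : V} (w : G.Walk u v) :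
    ∃ p : G.Walk u v, p.IsPath ∧ w.edgeParity + p.edgeParity ∈ G.cycleSpace := by
  induction w with
  | nil => exact ⟨nil, .nil, by simp⟩
  | @cons a b v h w ih =>
    obtain ⟨p, hp, hwp⟩ := ih
    by_cases ha : a ∈ p.support
    · refine ⟨p.dropUntil a ha, hp.dropUntil ha, ?_⟩
      have hsplit := congrArg edgeParity (p.take_spec ha)
      rw [edgeParity_append] at hsplit
      have key : (cons h w).edgeParity + (p.dropUntil a ha).edgeParity =
          (w.edgeParity + p.edgeParity) + (cons h (p.takeUntil a ha)).edgeParity := by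
        rw [← hsplit, edgeParity_cons, edgeParity_cons]
        linear_combination (norm := module) -ZModModule.add_self (p.takeUntil a ha).edgeParity
      rw [key]
      exact add_mem hwp (edgeParity_cons_mem_cycleSpace h (hp.takeUntil ha))
    · refine ⟨cons h p, (cons_isPath_iff h p).2 ⟨hp, ha⟩, ?_⟩
      rwa [edgeParity_cons, edgeParity_cons, add_add_add_comm, ZModModule.add_self, zero_add]

lemma edgeParity_mem_cycleSpace {v : V} (c : G.Walk v v) : c.edgeParity ∈ G.cycleSpace := by
  obtain ⟨p, hp, hcp⟩ := c.exists_isPath_edgeParity_add_mem_cycleSpace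
  rwa [(isPath_iff_nil.1 hp).eq_nil, edgeParity_nil, add_zero] at hcp

end Walk

lemma edgeSum_union {S T : Finset (Sym2 V)} (h : Disjoint S T) (f : Sym2 V → ZMod 2) :
    edgeSum (S ∪ T) f = edgeSum S f + edgeSum T f := by
  simp only [edgeSum_apply, sum_union h]

lemma edgeSum_edgeParity (S : Finset (Sym2 V)) {u v : V} (w : G.Walk u v) :
    edgeSum S w.edgeParity = (w.edges.map (eInd S)).sum := by
  rw [Walk.edgeParity, map_list_sum, List.map_map]
  congr 1
  refine List.map_congr_left fun e _ => ?_
  simp [edgeSum_apply, Pi.single_apply, eInd]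

lemma edgeSum_edgeParity_eq_zero {S : Finset (Sym2 V)} {u v : V} {w : G.Walk u v}
    (h : ∀ e ∈ w.edges, e ∉ S) : edgeSum S w.edgeParity = 0 := by
  rw [edgeSum_edgeParity]
  exact List.sum_eq_zero fun _ hx => by
    obtain ⟨e, he, rfl⟩ := List.mem_map.1 hx
    simp [eInd, h e he]

section MinimalCut

variable (G) in
def IsMinimalEdgeCut (x y : V) (P : Finset (Sym2 V)) : Prop :=
  (∀ p : G.Walk x y, ∃ e ∈ p.edges, e ∈ P) ∧ ∀ Q ⊂ P, ∃ p : G.Walk x y, ∀ e ∈ p.edges, e ∉ Q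

variable {x y : V} {P : Finset (Sym2 V)}

lemma xor_reachable_deleteEdges_iff_mem (hP : G.IsMinimalEdgeCut x y P) {a b : V}
    (hab : G.Adj a b) :
    Xor ((G.deleteEdges P).Reachable x a) ((G.deleteEdges P).Reachable x b) ↔ s(a, b) ∈ P := by
  constructor
  · rw [xor_iff_not_iff]
    refine fun h => by_contra fun he => h ⟨fun ha => ?_, fun hb => ?_⟩
    · exact ha.trans (deleteEdges_adj.2 ⟨hab, he⟩).reachable
    · exact hb.trans (deleteEdges_adj.2 ⟨hab.symm, Sym2.eq_swap ▸ he⟩).reachable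
  · intro he
    -- a path avoiding `P \ {ab}` leaves the side of `x` through some edge of `P`, necessarily `ab`
    obtain ⟨p, hp⟩ := hP.2 _ (erase_ssubset he)
    obtain ⟨d, hd, hfst, hsnd⟩ := p.exists_boundary_dart {v | (G.deleteEdges P).Reachable x v}
      (Reachable.refl x) (not_reachable_deleteEdges_of_forall_walk hP.1)
    have hdP : d.edge ∈ P :=
      by_contra fun h => hsnd (hfst.trans (deleteEdges_adj.2 ⟨d.adj, h⟩).reachable)
    have hde : s(d.fst, d.snd) = s(a, b) :=
      by_contra fun h => hp _ (List.mem_map_of_mem hd) (mem_erase.2 ⟨h, hdP⟩)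
    rcases Sym2.eq_iff.1 hde with ⟨rfl, rfl⟩ | ⟨rfl, rfl⟩
    exacts [Or.inl ⟨hfst, hsnd⟩, Or.inr ⟨hfst, hsnd⟩]

variable (G) in
noncomputable def cutSide (P : Finset (Sym2 V)) (x : V) : V → ZMod 2 :=
  {v | (G.deleteEdges P).Reachable x v}.indicator 1

lemma edgeSum_edgeParity_eq_cutSide_add (hP : G.IsMinimalEdgeCut x y P) {u v : V}
    (w : G.Walk u v) :
    edgeSum P w.edgeParity = G.cutSide P x u + G.cutSide P x v := by
  rw [edgeSum_edgeParity]
  refine w.sum_map_edges_eq_add fun a b hab => ?_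
  have hxor := xor_reachable_deleteEdges_iff_mem hP hab
  by_cases ha : (G.deleteEdges P).Reachable x a <;> by_cases hb : (G.deleteEdges P).Reachable x b
    <;> simp_all [eInd, cutSide, ZModModule.add_self]

lemma edgeSum_edgeParity_eq_one (hP : G.IsMinimalEdgeCut x y P) (w : G.Walk x y) :
    edgeSum P w.edgeParity = 1 := by
  simp [edgeSum_edgeParity_eq_cutSide_add hP, cutSide,
    not_reachable_deleteEdges_of_forall_walk hP.1]

lemma edgeSum_edgeParity_eq_zero_of_closed (hP : G.IsMinimalEdgeCut x y P) {v : V}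
    (c : G.Walk v v) :
    edgeSum P c.edgeParity = 0 := by
  rw [edgeSum_edgeParity_eq_cutSide_add hP, ZModModule.add_self]

end MinimalCut

lemma Walk.exists_mem_support_of_edgeSum_ne_zero {S : Finset (Sym2 V)} {u v : V}
    (w : G.Walk u v) (h : edgeSum S (eInd w.edges.toFinset) ≠ 0) :
    ∃ e ∈ S, ∃ z ∈ e, z ∈ w.support := by
  rw [edgeSum_apply] at h
  obtain ⟨e, heS, he⟩ := exists_ne_zero_of_sum_ne_zero h
  have hew : e ∈ w.edges := by simpa [eInd] using he
  induction e using Sym2.ind with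
  | _ a b => exact ⟨_, heS, a, Sym2.mem_mk_left a b, w.fst_mem_support_of_mem_edges hew⟩

lemma Walk.two_mul_dist_le_length {v u₁ u₂ : V} (c : G.Walk v v) (h₁ : u₁ ∈ c.support)
    (h₂ : u₂ ∈ c.support) : 2 * G.dist u₁ u₂ ≤ c.length := by
  let c' := c.rotate u₁ h₁
  have h₂' : u₂ ∈ c'.support := (c.mem_support_rotate_iff u₁ h₁).2 h₂
  have hlen := congrArg length (c'.take_spec h₂')
  rw [length_append, length_rotate] at hlen
  have d₁ := dist_le (c'.takeUntil u₂ h₂')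
  have d₂ := dist_le (c'.dropUntil u₂ h₂')
  rw [dist_comm] at d₂
  omega

end SimpleGraph

theorem stmt6_general {V : Type*} [DecidableEq V] (G : SimpleGraph V)
    (t : ℕ) (K : Set (Finset (Sym2 V)))
    (hK : ∀ C ∈ K, IsCycleEdgeSet G C ∧ C.card ≤ t)
    (hgen : ∀ C : Finset (Sym2 V), IsCycleEdgeSet G C → GenBy K C)
    (x y : V) (P : Finset (Sym2 V))
    (hsep : ∀ p : G.Walk x y, ∃ e ∈ p.edges, e ∈ P)
    (hmin : ∀ Q : Finset (Sym2 V), Q ⊂ P → ∃ p : G.Walk x y, ∀ e ∈ p.edges, e ∉ Q)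
    (P₁ P₂ : Finset (Sym2 V)) (hpart : P₁ ∪ P₂ = P) (hdisj : Disjoint P₁ P₂)
    (h₁ : P₁.Nonempty) (h₂ : P₂.Nonempty) :
    ∃ e₁ ∈ P₁, ∃ e₂ ∈ P₂, ∃ x₁ ∈ e₁, ∃ x₂ ∈ e₂, 2 * G.dist x₁ x₂ ≤ t := by
  have hP : G.IsMinimalEdgeCut x y P := ⟨hsep, hmin⟩
  subst hpart
  obtain ⟨p₁, hp₁⟩ := hmin P₂ (right_lt_sup.2 fun h => h₁.ne_empty (hdisj.eq_bot_of_le h))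
  obtain ⟨p₂, hp₂⟩ := hmin P₁ (left_lt_sup.2 fun h => h₂.ne_empty (hdisj.symm.eq_bot_of_le h))
  have hxy : edgeSum P₁ p₁.edgeParity = 1 := by
    have h := edgeSum_edgeParity_eq_one hP p₁
    rwa [edgeSum_union hdisj, edgeSum_edgeParity_eq_zero hp₁, add_zero] at h
  have hW : edgeSum P₁ (p₁.append p₂.reverse).edgeParity ≠ 0 := by
    simp [hxy, edgeSum_edgeParity_eq_zero hp₂]
  obtain ⟨D, hDK, hD₁⟩ := exists_apply_ne_zero_of_mem_span _
    (cycleSpace_le_span hgen (Walk.edgeParity_mem_cycleSpace _)) hW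
  obtain ⟨⟨v, c, hc, rfl⟩, hct⟩ := hK D hDK
  have hD₂ : edgeSum P₂ (eInd c.edges.toFinset) ≠ 0 := by
    have h := edgeSum_edgeParity_eq_zero_of_closed hP c
    rw [hc.edgeParity_eq, edgeSum_union hdisj, add_eq_zero_iff_eq_neg, ZModModule.neg_eq_self] at h
    rwa [h] at hD₁
  obtain ⟨e₁, he₁, x₁, hx₁, hxc₁⟩ := c.exists_mem_support_of_edgeSum_ne_zero hD₁
  obtain ⟨e₂, he₂, x₂, hx₂, hxc₂⟩ := c.exists_mem_support_of_edgeSum_ne_zero hD₂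
  refine ⟨e₁, he₁, e₂, he₂, x₁, hx₁, x₂, hx₂, ?_⟩
  calc 2 * G.dist x₁ x₂ ≤ c.length := c.two_mul_dist_le_length hxc₁ hxc₂
    _ = c.edges.toFinset.card := by
      rw [List.toFinset_card_of_nodup hc.edges_nodup, Walk.length_edges]
    _ ≤ t := hct

/-- if every cycle of `G` is a mod-2 sum of cycles from `K`, each of length
at most `t`, and `Π` is a minimal edge cutset separating `x` from `y`, then any partition
of `Π` into two nonempty parts contains edges with endpoints at distance at most `t/2`. -/
theorem stmt6 {V : Type*} [DecidableEq V] (G : SimpleGraph V) (hc : G.Connected)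
    (t : ℕ) (K : Set (Finset (Sym2 V)))
    (hK : ∀ C ∈ K, IsCycleEdgeSet G C ∧ C.card ≤ t)
    (hgen : ∀ C : Finset (Sym2 V), IsCycleEdgeSet G C → GenBy K C)
    (x y : V) (P : Finset (Sym2 V)) (hPe : (P : Set (Sym2 V)) ⊆ G.edgeSet)
    (hsep : ∀ p : G.Walk x y, ∃ e ∈ p.edges, e ∈ P)
    (hmin : ∀ Q : Finset (Sym2 V), Q ⊂ P → ∃ p : G.Walk x y, ∀ e ∈ p.edges, e ∉ Q)
    (P₁ P₂ : Finset (Sym2 V)) (hpart : P₁ ∪ P₂ = P) (hdisj : Disjoint P₁ P₂)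
    (h₁ : P₁.Nonempty) (h₂ : P₂.Nonempty) :
    ∃ e₁ ∈ P₁, ∃ e₂ ∈ P₂, ∃ x₁ ∈ e₁, ∃ x₂ ∈ e₂, 2 * G.dist x₁ x₂ ≤ t :=
  stmt6_general G t K hK hgen x y P hsep hmin P₁ P₂ hpart hdisj h₁ h₂
end

section
/- Let G be a graph, x and y two vertices, and Π a minimal edge cutset separating x from y. Let P₁, P₂ be x–y paths such that P_i avoids Π_{3−i}, where Π = Π₁ ∪ Π₂ is a partition. Suppose the symmetric difference P₁ Δ P₂ (as edge sets) is a mod-2 sum of cycles from a family K. Then some cycle in K meets both Π₁ and Π₂. -/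
/-- Telescoping: the mod-2 sum of a "coboundary" function along a walk. -/
lemma walk_coboundary_sum {V : Type*} (G : SimpleGraph V) (χ : V → ZMod 2)
    (f : Sym2 V → ZMod 2) (hf : ∀ a b : V, f s(a, b) = χ a + χ b) :
    ∀ {u v : V} (w : G.Walk u v), (w.edges.map f).sum = χ u + χ v := by
  intro u v w
  induction w with
  | nil => simp [CharTwo.add_self_eq_zero]
  | cons h p ih =>
    simp only [SimpleGraph.Walk.edges_cons, List.map_cons, List.sum_cons, ih, hf]
    have key : ∀ a b c : ZMod 2, a + b + (b + c) = a + c := by decide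
    apply key

/-- let `Π = Π₁ ∪ Π₂` be a partition of a minimal edge cutset separating
`x` from `y`, and `P₁, P₂` be `x`–`y` paths with `Pᵢ` avoiding `Π_{3-i}`.  If the
symmetric difference of the edge sets of `P₁` and `P₂` is a mod-2 sum of cycles from the
family `K`, then some cycle of that sum (in particular some cycle in `K`) meets both `Π₁`
and `Π₂`. -/
theorem stmt7 {V : Type*} [DecidableEq V] (G : SimpleGraph V) (hc : G.Connected)
    (x y : V) (P : Finset (Sym2 V)) (hPe : (P : Set (Sym2 V)) ⊆ G.edgeSet)
    (hsep : ∀ p : G.Walk x y, ∃ e ∈ p.edges, e ∈ P)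
    (hmin : ∀ Q : Finset (Sym2 V), Q ⊂ P → ∃ p : G.Walk x y, ∀ e ∈ p.edges, e ∉ Q)
    (P₁ P₂ : Finset (Sym2 V)) (hpart : P₁ ∪ P₂ = P) (hdisj : Disjoint P₁ P₂)
    (h₁ : P₁.Nonempty) (h₂ : P₂.Nonempty)
    (p₁ p₂ : G.Walk x y) (hp₁ : p₁.IsPath) (hp₂ : p₂.IsPath)
    (havoid₁ : ∀ e ∈ p₁.edges, e ∉ P₂) (havoid₂ : ∀ e ∈ p₂.edges, e ∉ P₁)
    (K : Set (Finset (Sym2 V))) (hK : ∀ C ∈ K, IsCycleEdgeSet G C)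
    (s : Finset (Finset (Sym2 V))) (hsK : (s : Set (Finset (Sym2 V))) ⊆ K)
    (hsum : ∀ e : Sym2 V,
      eInd (symmDiff p₁.edges.toFinset p₂.edges.toFinset) e = ∑ D ∈ s, eInd D e) :
    ∃ C ∈ K, (∃ e ∈ C, e ∈ P₁) ∧ (∃ e ∈ C, e ∈ P₂) := by
  classical
  -- χ is the indicator of reachability from x in G minus P
  set G' := G.deleteEdges (P : Set (Sym2 V)) with hG'
  set χ : V → ZMod 2 := fun v => if G'.Reachable x v then 1 else 0 with hχ
  set f : Sym2 V → ZMod 2 :=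
    Sym2.lift ⟨fun a b => χ a + χ b, fun a b => add_comm _ _⟩ with hfdef
  have hf : ∀ a b : V, f s(a, b) = χ a + χ b := fun a b => rfl
  have hχx : χ x = 1 := if_pos (SimpleGraph.Reachable.refl x)
  have hnr : ¬ G'.Reachable x y := by
    intro hr
    obtain ⟨w⟩ := hr
    have hw : ∀ e ∈ w.edges, e ∈ G.edgeSet := fun e he =>
      SimpleGraph.edgeSet_subset_edgeSet.2 (SimpleGraph.deleteEdges_le _)
        (w.edges_subset_edgeSet he)
    obtain ⟨e, he, heP⟩ := hsep (w.transfer G hw)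
    rw [SimpleGraph.Walk.edges_transfer] at he
    have := w.edges_subset_edgeSet he
    rw [hG', SimpleGraph.edgeSet_deleteEdges] at this
    exact this.2 heP
  have hχy : χ y = 0 := if_neg hnr
  -- f vanishes on graph edges not in P
  have hf0 : ∀ e : Sym2 V, e ∈ G.edgeSet → e ∉ P → f e = 0 := by
    intro e he heP
    induction e with
    | _ a b =>
      have hadj : G'.Adj a b := by
        rw [hG', SimpleGraph.deleteEdges_adj]
        exact ⟨he, heP⟩
      have : χ a = χ b := by
        simp only [hχ]
        by_cases hra : G'.Reachable x a
        · rw [if_pos hra, if_pos (hra.trans hadj.reachable)]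
        · rw [if_neg hra, if_neg (fun hrb => hra (hrb.trans hadj.symm.reachable))]
      rw [hf, this, CharTwo.add_self_eq_zero]
  -- walk sums
  have hwalk : ∀ {u v : V} (w : G.Walk u v), (w.edges.map f).sum = χ u + χ v :=
    fun w => walk_coboundary_sum G χ f hf w
  -- sum of f over edges of a path from x to y is 1
  have hpathsum : ∀ (p : G.Walk x y), p.IsPath → ∑ e ∈ p.edges.toFinset, f e = 1 := by
    intro p hp
    rw [List.sum_toFinset f hp.isTrail.edges_nodup, hwalk p, hχx, hχy, add_zero]
  -- sum of f over a cycle edge set is 0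
  have hcyclesum : ∀ C ∈ s, ∑ e ∈ C, f e = 0 := by
    intro C hC
    obtain ⟨v, w, hw, hwe⟩ := hK C (hsK hC)
    rw [← hwe, List.sum_toFinset f hw.isTrail.edges_nodup, hwalk w,
      CharTwo.add_self_eq_zero]
  -- edges of cycles in s are edges of G
  have hCedge : ∀ C ∈ s, ∀ e ∈ C, e ∈ G.edgeSet := by
    intro C hC e he
    obtain ⟨v, w, hw, hwe⟩ := hK C (hsK hC)
    rw [← hwe, List.mem_toFinset] at he
    exact w.edges_subset_edgeSet he
  -- the key functional: g C = ∑_{e ∈ P₁} (indicator of C) * f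
  set g : Finset (Sym2 V) → ZMod 2 := fun C => ∑ e ∈ P₁, eInd C e * f e with hg
  -- g of a finset equals the sum of f over its intersection with P₁
  have hg_filter : ∀ C : Finset (Sym2 V), g C = ∑ e ∈ P₁.filter (· ∈ C), f e := by
    intro C
    rw [hg, Finset.sum_filter]
    refine Finset.sum_congr rfl fun e _ => ?_
    by_cases h : e ∈ C <;> simp [eInd, h]
  -- g (p₁ edges) = 1
  have hgp₁ : g p₁.edges.toFinset = 1 := by
    rw [hg_filter, ← hpathsum p₁ hp₁]
    rw [Finset.filter_mem_eq_inter, Finset.inter_comm, ← Finset.filter_mem_eq_inter]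
    rw [Finset.sum_filter_of_ne]
    intro e he hne
    rw [List.mem_toFinset] at he
    by_contra heP₁
    have heP : e ∉ P := by
      rw [← hpart, Finset.mem_union]
      rintro (h | h)
      exacts [heP₁ h, havoid₁ e he h]
    exact hne (hf0 e (p₁.edges_subset_edgeSet he) heP)
  -- g (p₂ edges) = 0
  have hgp₂ : g p₂.edges.toFinset = 0 := by
    rw [hg_filter]
    apply Finset.sum_eq_zero
    intro e he
    rw [Finset.mem_filter, List.mem_toFinset] at he
    exact absurd he.1 (havoid₂ e he.2)
  -- symmDiff indicator is the sum of indicators mod 2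
  have hIndSD : ∀ (A B : Finset (Sym2 V)) (e : Sym2 V),
      eInd (symmDiff A B) e = eInd A e + eInd B e := by
    intro A B e
    simp only [eInd, Finset.mem_symmDiff]
    by_cases hA : e ∈ A <;> by_cases hB : e ∈ B <;> simp [hA, hB] <;> decide
  -- ∑_{D ∈ s} g D = 1
  have hsum_g : ∑ D ∈ s, g D = 1 := by
    have : ∑ D ∈ s, g D = ∑ e ∈ P₁, (∑ D ∈ s, eInd D e) * f e := by
      rw [Finset.sum_comm]
      simp [hg, Finset.sum_mul]
    rw [this]
    have h2 : ∑ e ∈ P₁, (∑ D ∈ s, eInd D e) * f e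
        = g p₁.edges.toFinset + g p₂.edges.toFinset := by
      simp only [hg, ← Finset.sum_add_distrib]
      refine Finset.sum_congr rfl fun e _ => ?_
      rw [← hsum e, hIndSD, add_mul]
    rw [h2, hgp₁, hgp₂, add_zero]
  -- pick D with g D ≠ 0
  have : (1 : ZMod 2) ≠ 0 := by decide
  obtain ⟨D, hDs, hgD⟩ := Finset.exists_ne_zero_of_sum_ne_zero (hsum_g ▸ this)
  refine ⟨D, hsK hDs, ?_, ?_⟩
  · -- D meets P₁
    by_contra h
    push_neg at h
    apply hgD
    rw [hg_filter]
    apply Finset.sum_eq_zero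
    intro e he
    rw [Finset.mem_filter] at he
    exact (h e he.2 he.1).elim
  · -- D meets P₂ : split the cycle sum over P₁, P₂ and the rest
    by_contra h
    push_neg at h
    apply hgD
    have h0 : ∑ e ∈ D, f e = 0 := hcyclesum D hDs
    have hsplit : ∑ e ∈ D, f e = ∑ e ∈ D.filter (· ∈ P₁), f e := by
      rw [Finset.sum_filter_of_ne]
      intro e he hne
      by_contra heP₁
      have heP : e ∉ P := by
        rw [← hpart, Finset.mem_union]
        rintro (hh | hh)
        exacts [heP₁ hh, h e he hh]
      exact hne (hf0 e (hCedge D hDs e he) heP)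
    rw [hg_filter, Finset.filter_mem_eq_inter, Finset.inter_comm,
      ← Finset.filter_mem_eq_inter, ← hsplit, h0]
end

section
/- Let T be an infinite, locally finite, subperiodic rooted tree with only finitely many infinite rays from the root. Then T has linear growth: there is a constant c such that the ball of radius n around the root in T has at most c·n + c vertices for all n. -/
/-- The descendants of `x` in the tree `T` rooted at `o`: vertices `y` such that `x`
lies on the (unique) path from `o` to `y`. -/
def Descendants {V : Type*} (T : SimpleGraph V) (o x : V) : Set V :=
  {y | T.dist o y = T.dist o x + T.dist x y}

/-- The rooted tree `T` (root `o`) is subperiodic: for every vertex `x` there is an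
injective graph homomorphism of the subtree of descendants of `x` into `T` sending `x`
to `o`. -/
def Subperiodic {V : Type*} (T : SimpleGraph V) (o : V) : Prop :=
  ∀ x : V, ∃ f : V → V, f x = o ∧ Set.InjOn f (Descendants T o x) ∧
    ∀ u ∈ Descendants T o x, ∀ v ∈ Descendants T o x, T.Adj u v → T.Adj (f u) (f v)

/-!
Every vertex with infinitely many descendants lies on one of the finitely many rays from the
root (König's lemma), and from some level `K` on, distinct rays pass through distinct vertices.
Call the *bush* at a vertex `x` the set of descendants of `x` lying below no ray vertex of the
next level; bushes are finite, and the ball of radius `n` is covered by the bushes at the ray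
vertices of level at most `n`. An embedding of the subtree at `f u` sending `f u` to the root
turns the ray `f` into a ray `g` and, for `s ≥ K`, maps the bush at `f (u + s)` injectively
into the bush at `g s`. Hence every bush has at most `E` vertices, the largest size of a bush at
a ray vertex of level at most `K`, and the ball of radius `n` has at most
`#rays * E * (n + 1)` vertices.
-/

namespace SimpleGraph

variable {V : Type*} {T : SimpleGraph V} {o x y z u v w : V}

theorem IsTree.length_eq_dist_of_isPath (hT : T.IsTree) {p : T.Walk u v} (hp : p.IsPath) :
    p.length = T.dist u v := by
  obtain ⟨q, hq, hqlen⟩ := hT.connected.exists_path_of_dist u v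
  rw [← hqlen, show p = q from congrArg Subtype.val
    ((hT.isAcyclic.subsingleton_path u v).elim ⟨p, hp⟩ ⟨q, hq⟩)]

theorem IsTree.dist_add_dist_of_mem_support (hT : T.IsTree) {p : T.Walk u v} (hp : p.IsPath)
    (hw : w ∈ p.support) : T.dist u w + T.dist w v = T.dist u v := by
  classical
  rw [← hT.length_eq_dist_of_isPath (hp.takeUntil hw), ← hT.length_eq_dist_of_isPath
    (hp.dropUntil hw), ← hT.length_eq_dist_of_isPath hp, ← Walk.length_append, Walk.take_spec]

theorem mem_descendants : y ∈ Descendants T o x ↔ T.dist o y = T.dist o x + T.dist x y :=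
  Iff.rfl

theorem mem_descendants_self : x ∈ Descendants T o x := by
  simp [Descendants]

theorem mem_descendants_root : v ∈ Descendants T o o := by
  simp [Descendants]

theorem dist_add_dist_of_mem_descendants (hconn : T.Connected) (hy : y ∈ Descendants T o x)
    (hz : z ∈ Descendants T o y) : T.dist x y + T.dist y z = T.dist x z := by
  have := hconn.dist_triangle (u := x) (v := y) (w := z)
  have := hconn.dist_triangle (u := o) (v := x) (w := z)
  simp only [mem_descendants] at hy hz
  omega

theorem mem_descendants_trans (hconn : T.Connected) (hy : y ∈ Descendants T o x)
    (hz : z ∈ Descendants T o y) : z ∈ Descendants T o x := by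
  have := dist_add_dist_of_mem_descendants hconn hy hz
  simp only [mem_descendants] at hy hz ⊢
  omega

theorem mem_descendants_of_dist_add_dist (hconn : T.Connected) (hv : v ∈ Descendants T o x)
    (hw : T.dist x w + T.dist w v = T.dist x v) : w ∈ Descendants T o x := by
  have := hconn.dist_triangle (u := o) (v := x) (w := w)
  have := hconn.dist_triangle (u := o) (v := w) (w := v)
  simp only [mem_descendants] at hv ⊢
  omega

theorem dist_root_of_adj_of_mem_descendants (hc : T.Adj x y) (hy : y ∈ Descendants T o x) :
    T.dist o y = T.dist o x + 1 := by
  rwa [mem_descendants, dist_eq_one_iff_adj.2 hc] at hy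

theorem exists_adj_mem_descendants (hconn : T.Connected) (hv : v ∈ Descendants T o x)
    (hne : v ≠ x) : ∃ c, T.Adj x c ∧ c ∈ Descendants T o x ∧ v ∈ Descendants T o c := by
  obtain ⟨p, -, hplen⟩ := hconn.exists_path_of_dist x v
  have hp : ¬ p.Nil := Walk.not_nil_of_ne hne.symm
  have hsnd : T.dist p.snd v + 1 ≤ T.dist x v := by
    rw [← hplen, ← p.length_tail_add_one hp]
    exact Nat.add_le_add_right (dist_le _) 1
  have hxc := dist_eq_one_iff_adj.2 (p.adj_snd hp)
  have := hconn.dist_triangle (u := x) (v := p.snd) (w := v)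
  have hc : p.snd ∈ Descendants T o x := mem_descendants_of_dist_add_dist hconn hv (by omega)
  refine ⟨p.snd, p.adj_snd hp, hc, ?_⟩
  have := dist_root_of_adj_of_mem_descendants (p.adj_snd hp) hc
  simp only [mem_descendants] at hv ⊢
  omega

theorem IsTree.mem_support_of_mem_descendants (hT : T.IsTree) {p : T.Walk o v} (hp : p.IsPath)
    (hz : v ∈ Descendants T o z) : z ∈ p.support := by
  obtain ⟨p₁, hp₁⟩ := hT.connected.exists_walk_length_eq_dist o z
  obtain ⟨p₂, hp₂⟩ := hT.connected.exists_walk_length_eq_dist z v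
  have hlen : (p₁.append p₂).length = T.dist o v := by
    rw [Walk.length_append, hp₁, hp₂]; exact hz.symm
  rw [show p = p₁.append p₂ from congrArg Subtype.val
    ((hT.isAcyclic.subsingleton_path o v).elim ⟨p, hp⟩
      ⟨_, (p₁.append p₂).isPath_of_length_eq_dist hlen⟩)]
  exact Walk.mem_support_append_iff _ _ |>.2 (Or.inl p₁.end_mem_support)

theorem IsTree.getVert_dist_of_mem_descendants (hT : T.IsTree) {p : T.Walk o v} (hp : p.IsPath)
    (hz : v ∈ Descendants T o z) : p.getVert (T.dist o z) = z := by
  classical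
  have hzp := hT.mem_support_of_mem_descendants hp hz
  rw [← hT.length_eq_dist_of_isPath (hp.takeUntil hzp), p.getVert_length_takeUntil hzp]

theorem IsTree.eq_of_mem_descendants_of_dist_eq (hT : T.IsTree) (hz : v ∈ Descendants T o z)
    (hw : v ∈ Descendants T o w) (h : T.dist o z = T.dist o w) : z = w := by
  obtain ⟨p, hp, -⟩ := hT.connected.exists_path_of_dist o v
  rw [← hT.getVert_dist_of_mem_descendants hp hz, h, hT.getVert_dist_of_mem_descendants hp hw]

theorem eq_of_adj_of_dist_eq_add_one (hT : T.IsTree) (hy : T.Adj y v) (hz : T.Adj z v)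
    (hyv : T.dist o v = T.dist o y + 1) (hzv : T.dist o v = T.dist o z + 1) : y = z :=
  hT.eq_of_mem_descendants_of_dist_eq (v := v)
    (show T.dist o v = T.dist o y + T.dist y v by rw [dist_eq_one_iff_adj.2 hy]; exact hyv)
    (show T.dist o v = T.dist o z + T.dist z v by rw [dist_eq_one_iff_adj.2 hz]; exact hzv)
    (by omega)

section Rays

variable {f g : ℕ → V}

def rootedRays (T : SimpleGraph V) (o : V) : Set (ℕ → V) :=
  {f | IsRay T f ∧ f 0 = o}

theorem IsRay.shift (hf : IsRay T f) (a : ℕ) : IsRay T (fun k => f (a + k)) :=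
  ⟨fun _ _ h => Nat.add_left_cancel (hf.1 h), fun n => hf.2 (a + n)⟩

theorem IsRay.dist_eq (hT : T.IsTree) (hf : IsRay T f) (n : ℕ) : T.dist (f 0) (f n) = n := by
  induction n using Nat.strong_induction_on with
  | _ n ih =>
    match n with
    | 0 => exact dist_self
    | 1 => exact dist_eq_one_iff_adj.2 (hf.2 0)
    | n + 2 =>
      have hn := ih n (by omega)
      have hn1 := ih (n + 1) (by omega)
      obtain h | h : T.dist (f 0) (f (n + 1)) = T.dist (f 0) (f (n + 2)) + 1 ∨
          T.dist (f 0) (f (n + 2)) = T.dist (f 0) (f (n + 1)) + 1 :=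
        hT.isAcyclic.dist_eq_dist_add_one_of_adj_of_reachable (f 0) (hf.2 (n + 1))
          (hT.connected _ _)
      · -- then `f n` and `f (n + 2)` would both be the parent of `f (n + 1)`
        have := eq_of_adj_of_dist_eq_add_one hT (hf.2 n) (hf.2 (n + 1)).symm (by omega) h
        exact absurd (hf.1 this) (by omega)
      · omega

theorem dist_root_of_mem_rootedRays (hT : T.IsTree) (hf : f ∈ rootedRays T o) (n : ℕ) :
    T.dist o (f n) = n := by
  rw [← hf.2]
  exact IsRay.dist_eq hT hf.1 n

theorem mem_descendants_of_mem_rootedRays (hT : T.IsTree) (hf : f ∈ rootedRays T o) {a b : ℕ}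
    (hab : a ≤ b) : f b ∈ Descendants T o (f a) := by
  have := IsRay.dist_eq hT (IsRay.shift hf.1 a) (b - a)
  simp only [Nat.add_zero, Nat.add_sub_cancel' hab] at this
  rw [mem_descendants, dist_root_of_mem_rootedRays hT hf, dist_root_of_mem_rootedRays hT hf, this]
  omega

theorem apply_eq_of_mem_rootedRays_of_apply_eq (hT : T.IsTree) (hf : f ∈ rootedRays T o)
    (hg : g ∈ rootedRays T o) {n k : ℕ} (hfg : f n = g n) (hk : k ≤ n) : f k = g k :=
  hT.eq_of_mem_descendants_of_dist_eq (mem_descendants_of_mem_rootedRays hT hf hk)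
    (hfg ▸ mem_descendants_of_mem_rootedRays hT hg hk)
    (by rw [dist_root_of_mem_rootedRays hT hf, dist_root_of_mem_rootedRays hT hg])

theorem exists_injOn_apply_rootedRays (hT : T.IsTree) (hrays : (rootedRays T o).Finite) :
    ∃ K, ∀ n, K ≤ n → Set.InjOn (fun f => f n) (rootedRays T o) := by
  have hsep (p : (ℕ → V) × (ℕ → V)) : ∃ m, p.1 ≠ p.2 → p.1 m ≠ p.2 m := by
    by_cases h : p.1 = p.2
    · exact ⟨0, fun h' => absurd h h'⟩
    · exact (Function.ne_iff.1 h).imp fun _ hm _ => hm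
  choose d hd using hsep
  obtain ⟨K, hK⟩ := ((hrays.prod hrays).image d).bddAbove
  refine ⟨K, fun n hn f hf g hg hfg => by_contra fun hne => hd (f, g) hne ?_⟩
  exact apply_eq_of_mem_rootedRays_of_apply_eq hT hf hg hfg
    ((hK ⟨(f, g), ⟨hf, hg⟩, rfl⟩).trans hn)

theorem exists_mem_rootedRays_forall_mem {A : Set V} (ho : o ∈ A)
    (hstep : ∀ u ∈ A, ∃ c ∈ A, T.Adj u c ∧ T.dist o c = T.dist o u + 1) :
    ∃ f ∈ rootedRays T o, ∀ n, f n ∈ A ∧ T.dist o (f n) = n := by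
  choose! next hnextA hnextAdj hnextDist using hstep
  have hf (n : ℕ) : next^[n] o ∈ A ∧ T.dist o (next^[n] o) = n := by
    induction n with
    | zero => exact ⟨ho, dist_self⟩
    | succ n ih =>
      rw [Function.iterate_succ_apply']
      exact ⟨hnextA _ ih.1, by rw [hnextDist _ ih.1, ih.2]⟩
  refine ⟨fun n => next^[n] o, ⟨⟨fun i j hij => ?_, fun n => ?_⟩, rfl⟩, hf⟩
  · rw [← (hf i).2, ← (hf j).2]
    exact congrArg (T.dist o) hij
  · show T.Adj (next^[n] o) (next^[n + 1] o)
    rw [Function.iterate_succ_apply']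
    exact hnextAdj _ (hf n).1

end Rays

section LocallyFinite

variable [T.LocallyFinite]

theorem finite_descendants_inter (hconn : T.Connected) {A : Set V}
    (h : ∀ c, T.Adj x c → c ∈ Descendants T o x → (Descendants T o c ∩ A).Finite) :
    (Descendants T o x ∩ A).Finite := by
  refine ((((T.neighborSet x).toFinite.inter_of_left (Descendants T o x)).biUnion
    fun c hc => h c hc.1 hc.2).insert x).subset ?_
  rintro v ⟨hv, hvA⟩
  by_cases hvx : v = x
  · exact Or.inl hvx
  · obtain ⟨c, hxc, hc, hvc⟩ := exists_adj_mem_descendants hconn hv hvx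
    exact Or.inr (Set.mem_biUnion ⟨hxc, hc⟩ ⟨hvc, hvA⟩)

theorem exists_adj_infinite_descendants (hconn : T.Connected)
    (h : (Descendants T o x).Infinite) :
    ∃ c, T.Adj x c ∧ c ∈ Descendants T o x ∧ (Descendants T o c).Infinite := by
  by_contra! hfin
  have := finite_descendants_inter hconn (A := Set.univ) fun c hxc hc => by
    simpa using hfin c hxc hc
  exact h (by simpa using this)

/-- König's lemma. -/
theorem exists_mem_rootedRays_apply_eq (hT : T.IsTree) (hv : (Descendants T o v).Infinite) :
    ∃ f ∈ rootedRays T o, f (T.dist o v) = v := by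
  let A := {u | (Descendants T o u).Infinite ∧
    (v ∈ Descendants T o u ∨ u ∈ Descendants T o v)}
  have hstep : ∀ u ∈ A, ∃ c ∈ A, T.Adj u c ∧ T.dist o c = T.dist o u + 1 := by
    rintro u ⟨hu, hvu⟩
    by_cases huv : u ∈ Descendants T o v
    · obtain ⟨c, huc, hc, hcinf⟩ := exists_adj_infinite_descendants hT.connected hu
      exact ⟨c, ⟨hcinf, Or.inr (mem_descendants_trans hT.connected huv hc)⟩, huc,
        dist_root_of_adj_of_mem_descendants huc hc⟩
    · have hne : v ≠ u := fun h => huv (h ▸ mem_descendants_self)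
      obtain ⟨c, huc, hc, hvc⟩ :=
        exists_adj_mem_descendants hT.connected (hvu.resolve_right huv) hne
      exact ⟨c, ⟨hv.mono fun _ => mem_descendants_trans hT.connected hvc, Or.inl hvc⟩, huc,
        dist_root_of_adj_of_mem_descendants huc hc⟩
  have ho : o ∈ A := ⟨hv.mono fun _ _ => mem_descendants_root, Or.inl mem_descendants_root⟩
  obtain ⟨f, hf, hfA⟩ := exists_mem_rootedRays_forall_mem (A := A) ho hstep
  obtain ⟨⟨-, hvf | hfv⟩, hlevel⟩ := hfA (T.dist o v)
  · exact ⟨f, hf, hT.eq_of_mem_descendants_of_dist_eq hvf mem_descendants_self hlevel⟩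
  · exact ⟨f, hf, hT.eq_of_mem_descendants_of_dist_eq mem_descendants_self hfv hlevel⟩

def bush (T : SimpleGraph V) (o x : V) : Set V :=
  Descendants T o x \ ⋃ g ∈ rootedRays T o, Descendants T o (g (T.dist o x + 1))

theorem bush_finite (hT : T.IsTree) (x : V) : (bush T o x).Finite := by
  rw [bush, Set.sdiff_eq]
  refine finite_descendants_inter hT.connected fun c hxc hc => ?_
  by_cases hcinf : (Descendants T o c).Infinite
  · obtain ⟨g, hg, hgc⟩ := exists_mem_rootedRays_apply_eq hT hcinf
    rw [dist_root_of_adj_of_mem_descendants hxc hc] at hgc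
    exact Set.finite_empty.subset fun y ⟨hy, hyB⟩ => hyB (Set.mem_biUnion hg (hgc ▸ hy))
  · exact (Set.not_infinite.1 hcinf).subset Set.inter_subset_left

theorem rootedRays_nonempty [Infinite V] (hT : T.IsTree) : (rootedRays T o).Nonempty :=
  let ⟨f, hf, _⟩ := exists_mem_rootedRays_apply_eq hT (v := o)
    (Set.infinite_univ.mono fun _ _ => mem_descendants_root)
  ⟨f, hf⟩

end LocallyFinite

structure IsDescendantsEmbedding (T : SimpleGraph V) (o x : V) (φ : V → V) : Prop where
  map_self : φ x = o
  injOn : Set.InjOn φ (Descendants T o x)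
  map_adj : ∀ u ∈ Descendants T o x, ∀ v ∈ Descendants T o x, T.Adj u v → T.Adj (φ u) (φ v)

theorem exists_isDescendantsEmbedding_of_subperiodic (h : Subperiodic T o) (x : V) :
    ∃ φ, IsDescendantsEmbedding T o x φ :=
  let ⟨φ, hx, hinj, hadj⟩ := h x
  ⟨φ, hx, hinj, hadj⟩

namespace IsDescendantsEmbedding

variable {φ : V → V}

theorem exists_walk_map (hφ : IsDescendantsEmbedding T o x φ) {a b : V} (p : T.Walk a b)
    (hp : ∀ w ∈ p.support, w ∈ Descendants T o x) :
    ∃ q : T.Walk (φ a) (φ b), q.support = p.support.map φ := by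
  induction p with
  | nil => exact ⟨Walk.nil, rfl⟩
  | cons h p ih =>
    obtain ⟨q, hq⟩ := ih fun w hw => hp w (List.mem_cons_of_mem _ hw)
    exact ⟨.cons (hφ.map_adj _ (hp _ (by simp)) _ (hp _ (by simp)) h) q, by simp [hq]⟩

theorem dist_map (hφ : IsDescendantsEmbedding T o x φ) (hT : T.IsTree) {a b : V}
    (ha : a ∈ Descendants T o x) (hb : b ∈ Descendants T o a) :
    T.dist (φ a) (φ b) = T.dist a b := by
  obtain ⟨p, hp, hlen⟩ := hT.connected.exists_path_of_dist a b
  have hsupp (w : V) (hw : w ∈ p.support) : w ∈ Descendants T o x :=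
    mem_descendants_trans hT.connected ha
      (mem_descendants_of_dist_add_dist hT.connected hb (hT.dist_add_dist_of_mem_support hp hw))
  obtain ⟨q, hq⟩ := hφ.exists_walk_map p hsupp
  have hqp : q.IsPath := by
    rw [Walk.isPath_def, hq]
    exact hp.support_nodup.map_on fun u hu v hv huv =>
      hφ.injOn (hsupp u hu) (hsupp v hv) huv
  have hqlen := congrArg List.length hq
  rw [List.length_map, Walk.length_support, Walk.length_support] at hqlen
  rw [← hT.length_eq_dist_of_isPath hqp, ← hlen]
  omega

theorem dist_root_map (hφ : IsDescendantsEmbedding T o x φ) (hT : T.IsTree)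
    (hv : v ∈ Descendants T o x) : T.dist o (φ v) = T.dist x v := by
  rw [← hφ.map_self]
  exact hφ.dist_map hT mem_descendants_self hv

theorem map_mem_descendants (hφ : IsDescendantsEmbedding T o x φ) (hT : T.IsTree)
    (hu : u ∈ Descendants T o x) (hv : v ∈ Descendants T o u) : φ v ∈ Descendants T o (φ u) := by
  rw [mem_descendants, hφ.dist_root_map hT hu, hφ.dist_root_map hT
    (mem_descendants_trans hT.connected hu hv), hφ.dist_map hT hu hv]
  exact (dist_add_dist_of_mem_descendants hT.connected hu hv).symm

theorem mem_descendants_of_map_mem (hφ : IsDescendantsEmbedding T o x φ) (hT : T.IsTree)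
    (hz : z ∈ Descendants T o x) (hzy : T.Adj z y) (hy : y ∈ Descendants T o z)
    (hv : v ∈ Descendants T o z) (h : φ v ∈ Descendants T o (φ y)) :
    v ∈ Descendants T o y := by
  have hyx := mem_descendants_trans hT.connected hz hy
  have hchild {c : V} (hzc : T.Adj z c) (hc : c ∈ Descendants T o z) :
      T.dist o (φ c) = T.dist x z + 1 := by
    rw [hφ.dist_root_map hT (mem_descendants_trans hT.connected hz hc),
      ← dist_add_dist_of_mem_descendants hT.connected hz hc, dist_eq_one_iff_adj.2 hzc]
  by_cases hvz : v = z
  · subst hvz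
    have := hφ.dist_root_map hT hz
    rw [mem_descendants, hchild hzy hy] at h
    omega
  obtain ⟨c, hzc, hc, hvc⟩ := exists_adj_mem_descendants hT.connected hv hvz
  have hcx := mem_descendants_trans hT.connected hz hc
  have : φ c = φ y := hT.eq_of_mem_descendants_of_dist_eq
    (hφ.map_mem_descendants hT hcx hvc) h (by rw [hchild hzc hc, hchild hzy hy])
  rwa [← hφ.injOn hcx hyx this]

theorem comp_shift_mem_rootedRays {f : ℕ → V} {u : ℕ} (hφ : IsDescendantsEmbedding T o (f u) φ)
    (hT : T.IsTree) (hf : f ∈ rootedRays T o) :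
    (fun r => φ (f (u + r))) ∈ rootedRays T o := by
  have hdesc (r : ℕ) : f (u + r) ∈ Descendants T o (f u) :=
    mem_descendants_of_mem_rootedRays hT hf (Nat.le_add_right u r)
  have hlevel (r : ℕ) : T.dist o (φ (f (u + r))) = r := by
    rw [hφ.dist_root_map hT (hdesc r)]
    exact IsRay.dist_eq hT (IsRay.shift hf.1 u) r
  refine ⟨⟨fun i j hij => ?_, fun r => hφ.map_adj _ (hdesc r) _ (hdesc (r + 1)) (hf.1.2 _)⟩,
    hφ.map_self⟩
  rw [← hlevel i, ← hlevel j]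
  exact congrArg (T.dist o) hij

theorem mapsTo_bush {f : ℕ → V} {u s : ℕ} (hφ : IsDescendantsEmbedding T o (f u) φ)
    (hT : T.IsTree) (hf : f ∈ rootedRays T o)
    (hs : Set.InjOn (fun g => g s) (rootedRays T o)) :
    Set.MapsTo φ (bush T o (f (u + s))) (bush T o (φ (f (u + s)))) := by
  have hg := hφ.comp_shift_mem_rootedRays hT hf
  have hfs : f (u + s) ∈ Descendants T o (f u) :=
    mem_descendants_of_mem_rootedRays hT hf (Nat.le_add_right u s)
  have hlevel : T.dist o (φ (f (u + s))) = s := dist_root_of_mem_rootedRays hT hg s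
  rintro v ⟨hv, hvoff⟩
  have hφv := hφ.map_mem_descendants hT hfs hv
  refine ⟨hφv, fun hmem => ?_⟩
  obtain ⟨h, hh, hφvh⟩ := Set.mem_iUnion₂.1 hmem
  rw [hlevel] at hφvh
  -- the ray `h` through `φ v` agrees with the image ray at level `s`, hence is the image ray
  have hhs : h s = φ (f (u + s)) := hT.eq_of_mem_descendants_of_dist_eq
    (mem_descendants_trans hT.connected
      (mem_descendants_of_mem_rootedRays hT hh (Nat.le_succ s)) hφvh)
    hφv (by rw [dist_root_of_mem_rootedRays hT hh, hlevel])
  rw [hs hh hg hhs] at hφvh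
  refine hvoff (Set.mem_iUnion₂.2 ⟨f, hf, ?_⟩)
  rw [dist_root_of_mem_rootedRays hT hf]
  exact hφ.mem_descendants_of_map_mem hT hfs (hf.1.2 (u + s))
    (mem_descendants_of_mem_rootedRays hT hf (Nat.le_succ _)) hv hφvh

end IsDescendantsEmbedding

theorem exists_ncard_bush_le [T.LocallyFinite] (hT : T.IsTree) (hsub : Subperiodic T o)
    (hrays : (rootedRays T o).Finite) :
    ∃ E, ∀ f ∈ rootedRays T o, ∀ t, (bush T o (f t)).ncard ≤ E := by
  obtain ⟨K, hK⟩ := exists_injOn_apply_rootedRays hT hrays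
  obtain ⟨E, hE⟩ := ((hrays.prod (Set.finite_Iic K)).image
    fun p : (ℕ → V) × ℕ => (bush T o (p.1 p.2)).ncard).bddAbove
  have hlow : ∀ f ∈ rootedRays T o, ∀ t ≤ K, (bush T o (f t)).ncard ≤ E :=
    fun f hf t ht => hE ⟨(f, t), ⟨hf, ht⟩, rfl⟩
  refine ⟨E, fun f hf t => ?_⟩
  rcases le_total t K with ht | ht
  · exact hlow f hf t ht
  obtain ⟨u, rfl⟩ := Nat.exists_eq_add_of_le' ht
  obtain ⟨φ, hφ⟩ := exists_isDescendantsEmbedding_of_subperiodic hsub (f u)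
  have hfs : f (u + K) ∈ Descendants T o (f u) :=
    mem_descendants_of_mem_rootedRays hT hf (Nat.le_add_right u K)
  calc (bush T o (f (u + K))).ncard ≤ (bush T o (φ (f (u + K)))).ncard :=
        Set.ncard_le_ncard_of_injOn φ (hφ.mapsTo_bush hT hf (hK K le_rfl))
          (hφ.injOn.mono fun _ hv => mem_descendants_trans hT.connected hfs hv.1)
          (bush_finite hT _)
    _ ≤ E := hlow _ (hφ.comp_shift_mem_rootedRays hT hf) K le_rfl

theorem ball_subset_biUnion_bush (hT : T.IsTree) (hrays : (rootedRays T o).Finite)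
    (hne : (rootedRays T o).Nonempty) (n : ℕ) :
    {v | T.dist o v ≤ n} ⊆
      ⋃ p ∈ hrays.toFinset ×ˢ Finset.range (n + 1), bush T o (p.1 p.2) := by
  classical
  intro v hv
  obtain ⟨f₀, hf₀⟩ := hne
  let P (t : ℕ) : Prop := ∃ f ∈ rootedRays T o, v ∈ Descendants T o (f t)
  have hP0 : P 0 := ⟨f₀, hf₀, hf₀.2 ▸ mem_descendants_root⟩
  set t := Nat.findGreatest P (T.dist o v)
  obtain ⟨f, hf, hvf⟩ : P t := Nat.findGreatest_spec (Nat.zero_le _) hP0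
  have ht : t < n + 1 := Nat.lt_succ_of_le ((Nat.findGreatest_le _).trans hv)
  refine Set.mem_iUnion₂.2 ⟨(f, t), Finset.mem_product.2 ⟨hrays.mem_toFinset.2 hf,
    Finset.mem_range.2 ht⟩, hvf, fun hmem => ?_⟩
  obtain ⟨g, hg, hvg⟩ := Set.mem_iUnion₂.1 hmem
  change v ∈ Descendants T o (g (T.dist o (f t) + 1)) at hvg
  rw [dist_root_of_mem_rootedRays hT hf] at hvg
  have hle : t + 1 ≤ T.dist o v := by
    have := dist_root_of_mem_rootedRays hT hg (t + 1)
    rw [mem_descendants] at hvg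
    omega
  exact Nat.findGreatest_is_greatest (Nat.lt_succ_self t) hle ⟨g, hg, hvg⟩

end SimpleGraph

open SimpleGraph

/-- an infinite, locally finite, subperiodic rooted tree with finitely many
infinite rays from the root has linear growth. -/
theorem stmt9 {V : Type*} (T : SimpleGraph V) [∀ v, Fintype (T.neighborSet v)]
    (hconn : T.Connected) (hac : T.IsAcyclic) (hinf : Infinite V)
    (o : V) (hsub : Subperiodic T o)
    (hrays : {f : ℕ → V | IsRay T f ∧ f 0 = o}.Finite) :
    ∃ c : ℕ, ∀ n : ℕ, {v : V | T.dist o v ≤ n}.Finite ∧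
      {v : V | T.dist o v ≤ n}.ncard ≤ c * n + c := by
  have hT : T.IsTree := ⟨hconn, hac⟩
  obtain ⟨E, hE⟩ := exists_ncard_bush_le hT hsub hrays
  refine ⟨hrays.toFinset.card * E, fun n => ?_⟩
  set s := hrays.toFinset ×ˢ Finset.range (n + 1)
  have hcover := ball_subset_biUnion_bush hT hrays (rootedRays_nonempty hT) n
  have hfin : (⋃ p ∈ s, bush T o (p.1 p.2)).Finite :=
    s.finite_toSet.biUnion fun p _ => bush_finite hT _
  refine ⟨hfin.subset hcover, ?_⟩
  calc {v | T.dist o v ≤ n}.ncard ≤ (⋃ p ∈ s, bush T o (p.1 p.2)).ncard :=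
        Set.ncard_le_ncard hcover hfin
    _ ≤ ∑ p ∈ s, (bush T o (p.1 p.2)).ncard := s.set_ncard_biUnion_le _
    _ ≤ s.card * E := Finset.sum_le_card_nsmul _ _ _ fun p hp =>
        hE _ (hrays.mem_toFinset.1 (Finset.mem_product.1 hp).1) _
    _ = hrays.toFinset.card * E * n + hrays.toFinset.card * E := by
        rw [Finset.card_product, Finset.card_range]
        ring
end

section
/- A lexicographically minimal spanning tree T of a Cayley graph G (with respect to a fixed linear order on the generators and their inverses) is subperiodic: for every vertex x of T there is an injective graph homomorphism of the subtree T_x of descendants of x into T mapping x to the root, and T has the same growth function as G up to the identity on balls: the ball of radius n in T spans exactly the vertices of the ball of radius n in G. -/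
/-- The Cayley graph of a group with respect to a (symmetric) generating set `S`. -/
def cayley {Γ : Type*} [Group Γ] (S : Finset Γ) : SimpleGraph Γ :=
  SimpleGraph.fromRel fun x y => ∃ s ∈ S, y = x * s

/-- Given a choice `L v` of a word for each group element `v`, the union of the paths
from the identity spelling these words: `a ~ b` iff they are consecutive partial
products of some word `L v`. -/
def lexTree {Γ : Type*} [Group Γ] (L : Γ → List Γ) : SimpleGraph Γ :=
  SimpleGraph.fromRel fun a b =>
    ∃ (v : Γ) (k : ℕ), k + 1 ≤ (L v).length ∧
      a = ((L v).take k).prod ∧ b = ((L v).take (k + 1)).prod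

/-!
Replacing a prefix or a suffix of a shortlex-least word by a shortlex-smaller word representing the
same element would produce a shortlex-smaller word for the whole element; so prefixes and suffixes
of the normal forms `L v` are again normal forms. Hence `T` is the prefix tree of the normal forms,
in which the distance from `1` to `v` is the length of `L v`, which is also the word length of `v`.
Along a walk the word length changes by one per step, so `y` descends from `x` exactly when `L x`
is a prefix of `L y`, and left multiplication by `x⁻¹` deletes that prefix, hence embeds `T_x`
into `T`.
-/

namespace List

variable {α : Type*} {r : α → α → Prop}

theorem Lex.append_of_length_eq {s₁ s₂ : List α} (h : Lex r s₁ s₂)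
    (hlen : s₁.length = s₂.length) (t₁ t₂ : List α) :
    Lex r (s₁ ++ t₁) (s₂ ++ t₂) := by
  induction h with
  | nil => simp at hlen
  | cons _ ih => exact .cons (ih (by simpa using hlen))
  | rel h => exact .rel h

theorem Shortlex.append_same_right {s₁ s₂ : List α} (h : Shortlex r s₁ s₂) (t : List α) :
    Shortlex r (s₁ ++ t) (s₂ ++ t) := by
  rcases shortlex_def.mp h with hlt | ⟨hlen, hlex⟩
  · exact .of_length_lt (by simpa using hlt)
  · exact .of_lex (by simp [hlen]) (hlex.append_of_length_eq hlen t t)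

end List

open List

structure IsShortlexNormalForm {M : Type*} [Monoid M] (S : Set M) (r : M → M → Prop)
    (L : M → List M) : Prop where
  mem : ∀ v, ∀ s ∈ L v, s ∈ S
  prod_eq : ∀ v, (L v).prod = v
  shortlex : ∀ w : List M, (∀ s ∈ w, s ∈ S) → w ≠ L w.prod → Shortlex r (L w.prod) w

def wordTree {V α : Type*} (L : V → List α) : SimpleGraph V :=
  SimpleGraph.fromRel fun a b => ∃ s, L b = L a ++ [s]

section WordTree

variable {V α : Type*} {L : V → List α}

theorem wordTree_adj_of_eq_append {a b : V} {s : α} (h : L b = L a ++ [s]) :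
    (wordTree L).Adj a b :=
  ⟨by rintro rfl; simp at h, .inl ⟨s, h⟩⟩

theorem wordTree_length_le {a b : V} (p : (wordTree L).Walk a b) :
    (L b).length ≤ (L a).length + p.length := by
  induction p with
  | nil => simp
  | cons h _ ih =>
    rcases h.2 with ⟨s, hs⟩ | ⟨s, hs⟩ <;>
      simp only [hs, length_append, length_singleton, SimpleGraph.Walk.length_cons] at ih ⊢ <;>
      omega

theorem wordTree_prefix_of_length_eq {a b : V} (p : (wordTree L).Walk a b)
    (hp : (L b).length = (L a).length + p.length) : L a <+: L b := by
  induction p with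
  | nil => exact prefix_rfl
  | @cons a z b h p ih =>
    have hle := wordTree_length_le p
    rw [SimpleGraph.Walk.length_cons] at hp
    rcases h.2 with ⟨s, hs⟩ | ⟨s, hs⟩
    · rw [hs, length_append, length_singleton] at hle
      rw [hs] at ih
      exact (prefix_append _ _).trans (ih (by rw [length_append, length_singleton]; omega))
    · rw [hs, length_append, length_singleton] at hp
      omega

end WordTree

theorem exists_generator_of_cayley_adj {Γ : Type*} [Group Γ] {S : Finset Γ}
    (hsymm : ∀ s ∈ S, s⁻¹ ∈ S) {x y : Γ} (h : (cayley S).Adj x y) :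
    ∃ s ∈ S, y = x * s := by
  rcases h.2 with ⟨s, hs, rfl⟩ | ⟨s, hs, rfl⟩
  · exact ⟨s, hs, rfl⟩
  · exact ⟨s⁻¹, hsymm s hs, by group⟩

theorem exists_word_of_cayley_walk {Γ : Type*} [Group Γ] {S : Finset Γ}
    (hsymm : ∀ s ∈ S, s⁻¹ ∈ S) {x y : Γ} (p : (cayley S).Walk x y) :
    ∃ w : List Γ, (∀ s ∈ w, s ∈ S) ∧ w.prod = x⁻¹ * y ∧ w.length = p.length := by
  induction p with
  | nil => exact ⟨[], by simp, by simp, rfl⟩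
  | cons h _ ih =>
    obtain ⟨w, hwS, hwp, hwl⟩ := ih
    obtain ⟨s, hs, rfl⟩ := exists_generator_of_cayley_adj hsymm h
    refine ⟨s :: w, forall_mem_cons.2 ⟨hs, hwS⟩, ?_, by simp [hwl]⟩
    rw [prod_cons, hwp]
    group

namespace IsShortlexNormalForm

section Monoid

variable {M : Type*} [Monoid M] {S : Set M} {r : M → M → Prop} {L : M → List M}

theorem of_length_le_of_lex
    (hmem : ∀ v, ∀ s ∈ L v, s ∈ S)
    (hrep : ∀ v, (L v).prod = v)
    (hgeo : ∀ v (w : List M), (∀ s ∈ w, s ∈ S) → w.prod = v → (L v).length ≤ w.length)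
    (hlex : ∀ v (w : List M), (∀ s ∈ w, s ∈ S) → w.prod = v → w.length = (L v).length →
      w ≠ L v → Lex r (L v) w) :
    IsShortlexNormalForm S r L where
  mem := hmem
  prod_eq := hrep
  shortlex w hw hne := by
    rcases (hgeo _ w hw rfl).lt_or_eq with hlt | heq
    · exact .of_length_lt hlt
    · exact .of_lex heq (hlex _ w hw rfl heq.symm hne)

theorem length_le (hL : IsShortlexNormalForm S r L) {w : List M} (hw : ∀ s ∈ w, s ∈ S) :
    (L w.prod).length ≤ w.length := by
  by_cases h : w = L w.prod
  · rw [← h]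
  · rcases shortlex_def.mp (hL.shortlex w hw h) with hlt | ⟨hlen, _⟩ <;> omega

variable [Std.Asymm r]

theorem not_shortlex (hL : IsShortlexNormalForm S r L) {w : List M} (hw : ∀ s ∈ w, s ∈ S) :
    ¬ Shortlex r w (L w.prod) := fun hlt => by
  by_cases h : w = L w.prod
  · rw [← h] at hlt
    exact Std.Irrefl.irrefl w hlt
  · exact Std.Asymm.asymm _ _ hlt (hL.shortlex w hw h)

theorem apply_prod_of_prefix (hL : IsShortlexNormalForm S r L) {a : List M} {v : M}
    (h : a <+: L v) : L a.prod = a := by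
  obtain ⟨b, hab⟩ := h
  have haS : ∀ s ∈ a, s ∈ S := fun s hs => hL.mem v s (hab ▸ mem_append_left b hs)
  have hbS : ∀ s ∈ b, s ∈ S := fun s hs => hL.mem v s (hab ▸ mem_append_right a hs)
  have hprod : (L a.prod ++ b).prod = v := by
    rw [prod_append, hL.prod_eq, ← prod_append, hab, hL.prod_eq]
  by_contra hne
  apply hL.not_shortlex (forall_mem_append.2 ⟨hL.mem _, hbS⟩)
  rw [hprod, ← hab]
  exact (hL.shortlex a haS (Ne.symm hne)).append_same_right b

theorem apply_prod_of_suffix (hL : IsShortlexNormalForm S r L) {b : List M} {v : M}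
    (h : b <:+ L v) : L b.prod = b := by
  obtain ⟨a, hab⟩ := h
  have haS : ∀ s ∈ a, s ∈ S := fun s hs => hL.mem v s (hab ▸ mem_append_left b hs)
  have hbS : ∀ s ∈ b, s ∈ S := fun s hs => hL.mem v s (hab ▸ mem_append_right a hs)
  have hprod : (a ++ L b.prod).prod = v := by
    rw [prod_append, hL.prod_eq, ← prod_append, hab, hL.prod_eq]
  by_contra hne
  apply hL.not_shortlex (forall_mem_append.2 ⟨haS, hL.mem _⟩)
  rw [hprod, ← hab]
  exact (hL.shortlex b hbS (Ne.symm hne)).append_left a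

theorem apply_one (hL : IsShortlexNormalForm S r L) : L 1 = [] :=
  hL.apply_prod_of_prefix (v := 1) nil_prefix

end Monoid

section Group

variable {Γ : Type*} [Group Γ] {r : Γ → Γ → Prop} {L : Γ → List Γ}

theorem wordTree_le_cayley {S : Finset Γ} (hL : IsShortlexNormalForm (S : Set Γ) r L) :
    wordTree L ≤ cayley S := by
  have hstep {a b : Γ} {s : Γ} (hs : L b = L a ++ [s]) : ∃ t ∈ S, b = a * t :=
    ⟨s, hL.mem b s (by simp [hs]),
      by rw [← hL.prod_eq b, hs, prod_append, hL.prod_eq, prod_singleton]⟩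
  rintro a b ⟨hne, ⟨s, hs⟩ | ⟨s, hs⟩⟩
  · exact ⟨hne, .inl (hstep hs)⟩
  · exact ⟨hne, .inr (hstep hs)⟩

variable {S : Set Γ} [Std.Asymm r]

theorem lexTree_eq (hL : IsShortlexNormalForm S r L) : lexTree L = wordTree L := by
  unfold lexTree wordTree
  congr 1
  ext a b
  constructor
  · rintro ⟨v, k, hk, rfl, rfl⟩
    refine ⟨(L v)[k], ?_⟩
    rw [hL.apply_prod_of_prefix (take_prefix _ _), hL.apply_prod_of_prefix (take_prefix _ _),
      take_succ_eq_append_getElem hk]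
  · rintro ⟨s, hs⟩
    refine ⟨b, (L a).length, by simp [hs], ?_, ?_⟩
    · rw [hs, take_left, hL.prod_eq]
    · rw [take_of_length_le (by simp [hs]), hL.prod_eq]

theorem apply_inv_mul_of_append_eq (hL : IsShortlexNormalForm S r L) {x u : Γ} {t : List Γ}
    (h : L x ++ t = L u) : L (x⁻¹ * u) = t := by
  have ht : t.prod = x⁻¹ * u := by
    rw [eq_inv_mul_iff_mul_eq, ← hL.prod_eq x, ← prod_append, h, hL.prod_eq]
  rw [← ht]
  exact hL.apply_prod_of_suffix ⟨L x, h⟩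

theorem exists_wordTree_walk_one (hL : IsShortlexNormalForm S r L) (v : Γ) :
    ∃ p : (wordTree L).Walk 1 v, p.length = (L v).length := by
  suffices ∀ w v, L v = w → ∃ p : (wordTree L).Walk 1 v, p.length = w.length from this _ v rfl
  intro w
  induction w using List.reverseRecOn with
  | nil =>
    intro v hv
    rw [← hL.prod_eq v, hv, prod_nil]
    exact ⟨.nil, rfl⟩
  | append_singleton w s ih =>
    intro v hv
    have hw : L w.prod = w := hL.apply_prod_of_prefix (hv ▸ prefix_append w [s])
    obtain ⟨p, hp⟩ := ih _ hw
    exact ⟨p.concat (wordTree_adj_of_eq_append (by rw [hv, hw])), by simp [hp]⟩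

theorem wordTree_dist_one (hL : IsShortlexNormalForm S r L) (v : Γ) :
    (wordTree L).dist 1 v = (L v).length := by
  obtain ⟨p, hp⟩ := hL.exists_wordTree_walk_one v
  obtain ⟨q, hq⟩ := p.reachable.exists_walk_length_eq_dist
  have hle := wordTree_length_le q
  rw [hL.apply_one, hq] at hle
  exact le_antisymm (hp ▸ SimpleGraph.dist_le p) (by simpa using hle)

theorem prefix_of_mem_descendants (hL : IsShortlexNormalForm S r L) {x y : Γ}
    (hy : y ∈ Descendants (wordTree L) 1 x) : L x <+: L y := by
  obtain ⟨p, -⟩ := hL.exists_wordTree_walk_one x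
  obtain ⟨q, -⟩ := hL.exists_wordTree_walk_one y
  obtain ⟨pq, hpq⟩ := (p.reverse.append q).reachable.exists_walk_length_eq_dist
  apply wordTree_prefix_of_length_eq pq
  have hdist : (wordTree L).dist 1 y = (wordTree L).dist 1 x + (wordTree L).dist x y := hy
  rwa [hL.wordTree_dist_one, hL.wordTree_dist_one, ← hpq] at hdist

theorem wordTree_adj_inv_mul (hL : IsShortlexNormalForm S r L) {x u v : Γ}
    (hu : u ∈ Descendants (wordTree L) 1 x) (hv : v ∈ Descendants (wordTree L) 1 x)
    (h : (wordTree L).Adj u v) : (wordTree L).Adj (x⁻¹ * u) (x⁻¹ * v) := by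
  obtain ⟨tu, htu⟩ := hL.prefix_of_mem_descendants hu
  obtain ⟨tv, htv⟩ := hL.prefix_of_mem_descendants hv
  rcases h.2 with ⟨s, hs⟩ | ⟨s, hs⟩ <;> rw [← htu, ← htv] at hs
  · refine wordTree_adj_of_eq_append (s := s) ?_
    rw [hL.apply_inv_mul_of_append_eq htu, hL.apply_inv_mul_of_append_eq htv]
    simpa using hs
  · refine (wordTree_adj_of_eq_append (s := s) ?_).symm
    rw [hL.apply_inv_mul_of_append_eq htu, hL.apply_inv_mul_of_append_eq htv]
    simpa using hs

end Group

theorem cayley_dist_one {Γ : Type*} [Group Γ] {S : Finset Γ}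
    {r : Γ → Γ → Prop} [Std.Asymm r] {L : Γ → List Γ} (hsymm : ∀ s ∈ S, s⁻¹ ∈ S)
    (hL : IsShortlexNormalForm (S : Set Γ) r L) (v : Γ) :
    (cayley S).dist 1 v = (L v).length := by
  obtain ⟨p, -⟩ := hL.exists_wordTree_walk_one v
  refine le_antisymm (hL.wordTree_dist_one v ▸ p.reachable.dist_anti hL.wordTree_le_cayley) ?_
  obtain ⟨q, hq⟩ := (p.mapLe hL.wordTree_le_cayley).reachable.exists_walk_length_eq_dist
  obtain ⟨w, hwS, hwp, hwl⟩ := exists_word_of_cayley_walk hsymm q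
  rw [inv_one, one_mul] at hwp
  rw [← hq, ← hwl, ← hwp]
  exact hL.length_le hwS

end IsShortlexNormalForm

theorem stmt15_general {Γ : Type*} [Group Γ]
    (S : Finset Γ) (hsymm : ∀ s ∈ S, s⁻¹ ∈ S)
    (ord : Γ → ℕ)  -- the linear order on generators
    (L : Γ → List Γ)
    (hmem : ∀ v : Γ, ∀ s ∈ L v, s ∈ S)
    (hrep : ∀ v : Γ, (L v).prod = v)
    (hgeo : ∀ (v : Γ) (w : List Γ), (∀ s ∈ w, s ∈ S) → w.prod = v →
      (L v).length ≤ w.length)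
    (hlex : ∀ (v : Γ) (w : List Γ), (∀ s ∈ w, s ∈ S) → w.prod = v →
      w.length = (L v).length → w ≠ L v →
      List.Lex (fun a b => ord a < ord b) (L v) w) :
    (∀ x : Γ, ∃ f : Γ → Γ, f x = 1 ∧
      Set.InjOn f (Descendants (lexTree L) 1 x) ∧
      ∀ u ∈ Descendants (lexTree L) 1 x, ∀ v ∈ Descendants (lexTree L) 1 x,
        (lexTree L).Adj u v → (lexTree L).Adj (f u) (f v)) ∧
    (∀ n : ℕ, {v : Γ | (lexTree L).dist 1 v ≤ n} = {v : Γ | (cayley S).dist 1 v ≤ n}) := by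
  have : Std.Asymm fun a b : Γ => ord a < ord b := ⟨fun _ _ => lt_asymm⟩
  have hL : IsShortlexNormalForm (S : Set Γ) _ L := .of_length_le_of_lex hmem hrep hgeo hlex
  rw [hL.lexTree_eq]
  refine ⟨fun x => ⟨(x⁻¹ * ·), inv_mul_cancel x, (mul_right_injective x⁻¹).injOn,
    fun u hu v hv => hL.wordTree_adj_inv_mul hu hv⟩, fun n => ?_⟩
  simp_rw [hL.wordTree_dist_one, hL.cayley_dist_one hsymm]

/-- a lexicographically minimal spanning tree `T` of a Cayley graph is
subperiodic, and the ball of radius `n` in `T` consists exactly of the vertices of the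
ball of radius `n` in the Cayley graph. -/
theorem stmt15 {Γ : Type*} [Group Γ]
    (S : Finset Γ) (h1 : (1 : Γ) ∉ S) (hsymm : ∀ s ∈ S, s⁻¹ ∈ S)
    (hgen : Subgroup.closure (S : Set Γ) = ⊤)
    (ord : Γ → ℕ) (hord : Set.InjOn ord (S : Set Γ))  -- the linear order on generators
    (L : Γ → List Γ)
    (hmem : ∀ v : Γ, ∀ s ∈ L v, s ∈ S)
    (hrep : ∀ v : Γ, (L v).prod = v)
    (hgeo : ∀ (v : Γ) (w : List Γ), (∀ s ∈ w, s ∈ S) → w.prod = v →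
      (L v).length ≤ w.length)
    (hlex : ∀ (v : Γ) (w : List Γ), (∀ s ∈ w, s ∈ S) → w.prod = v →
      w.length = (L v).length → w ≠ L v →
      List.Lex (fun a b => ord a < ord b) (L v) w) :
    (∀ x : Γ, ∃ f : Γ → Γ, f x = 1 ∧
      Set.InjOn f (Descendants (lexTree L) 1 x) ∧
      ∀ u ∈ Descendants (lexTree L) 1 x, ∀ v ∈ Descendants (lexTree L) 1 x,
        (lexTree L).Adj u v → (lexTree L).Adj (f u) (f v)) ∧
    (∀ n : ℕ, {v : Γ | (lexTree L).dist 1 v ≤ n} = {v : Γ | (cayley S).dist 1 v ≤ n}) :=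
  stmt15_general S hsymm ord L hmem hrep hgeo hlex
end

section
/- Let G be a locally finite connected infinite vertex-transitive graph of linear growth (there is c with |B_n(o)| ≤ c·n + c for all n). Then G has exactly two ends. -/
/-!
Let `N` be the largest number of infinite components of `G - K` over finite sets `K`. Linear
growth bounds it by `2c`: arbitrarily large spheres have at most `2c` vertices, and every
component outside a ball meets the next sphere. Once a finite set realises `N`, its infinite
complementary components correspond to the ends.

`N ≤ 2`: a ball realising `N` and a far translate of it each lie in a single component of the
other's complement, so their union has at least `2N - 2` infinite complementary components.

`N ≥ 2`: otherwise transitivity gives uniform detours, i.e. any two points of the sphere of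
radius `R(r) + 1` are joined by a walk avoiding the `r`-ball and staying within bounded
distance. A small sphere, which separates its centre from far-away vertices, has at most `4c²`
mutual distances, so at one of `4c² + 1` rapidly growing scales it splits into well-separated
clusters; bypassing the clusters one at a time yields a walk across the sphere avoiding it.
-/

namespace SimpleGraph

variable {V V' : Type*} {G : SimpleGraph V} {G' : SimpleGraph V'}

section Metric

def closedBall (G : SimpleGraph V) (x : V) (n : ℕ) : Set V := {v | G.dist x v ≤ n}

def sphere (G : SimpleGraph V) (x : V) (n : ℕ) : Set V := {v | G.dist x v = n}

variable {x u v : V} {m n : ℕ}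

@[simp] lemma mem_closedBall : v ∈ G.closedBall x n ↔ G.dist x v ≤ n := Iff.rfl

@[simp] lemma mem_sphere : v ∈ G.sphere x n ↔ G.dist x v = n := Iff.rfl

lemma closedBall_mono (h : m ≤ n) : G.closedBall x m ⊆ G.closedBall x n :=
  fun _ hv => hv.trans h

lemma sphere_subset_closedBall : G.sphere x n ⊆ G.closedBall x n := fun _ hv => hv.le

lemma Adj.dist_le_dist_add_one (h : G.Adj u v) (x : V) : G.dist x v ≤ G.dist x u + 1 :=
  (h.reachable.dist_triangle_right x).trans_eq (by rw [dist_eq_one_iff_adj.mpr h])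

lemma Iso.dist_le (φ : G ≃g G') (u v : V) : G'.dist (φ u) (φ v) ≤ G.dist u v := by
  by_cases hr : G.Reachable u v
  · obtain ⟨p, hp⟩ := hr.exists_walk_length_eq_dist
    exact (SimpleGraph.dist_le (p.map φ.toHom)).trans_eq (by rw [Walk.length_map, hp])
  · rw [dist_eq_zero_of_not_reachable hr,
      dist_eq_zero_of_not_reachable (mt Iso.reachable_iff.mp hr)]

lemma Iso.dist_eq (φ : G ≃g G') (u v : V) : G'.dist (φ u) (φ v) = G.dist u v :=
  (φ.dist_le u v).antisymm (by simpa using φ.symm.dist_le (φ u) (φ v))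

lemma Iso.apply_mem_closedBall_iff (φ : G ≃g G') :
    φ v ∈ G'.closedBall (φ x) n ↔ v ∈ G.closedBall x n := by
  simp [φ.dist_eq]

lemma Preconnected.closedBall_finite [G.LocallyFinite] (hG : G.Preconnected) (x : V) :
    ∀ n, (G.closedBall x n).Finite
  | 0 => (Set.finite_singleton x).subset fun v hv => by
      simpa [eq_comm] using ((hG x v).dist_eq_zero_iff).mp (Nat.le_zero.mp hv)
  | n + 1 => by
    refine ((hG.closedBall_finite x n).union ((hG.closedBall_finite x n).biUnion
      fun y _ => (G.neighborSet y).toFinite)).subset fun v hv => ?_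
    rcases (mem_closedBall.mp hv).lt_or_eq with hlt | heq
    · exact Or.inl (Nat.lt_succ_iff.mp hlt)
    obtain ⟨p, hp⟩ := (hG x v).exists_walk_length_eq_dist
    have hnil : ¬ p.Nil := by simp [← Walk.length_eq_zero_iff, hp, heq]
    refine Or.inr (Set.mem_biUnion (x := p.penultimate) ?_ (p.adj_penultimate hnil))
    exact (dist_le p.dropLast).trans (by simp [Walk.length_dropLast, hp, heq])

lemma Preconnected.sphere_finite [G.LocallyFinite] (hG : G.Preconnected) (x : V) (n : ℕ) :
    (G.sphere x n).Finite :=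
  (hG.closedBall_finite x n).subset sphere_subset_closedBall

lemma _root_.Set.Finite.exists_subset_closedBall {K : Set V} (hK : K.Finite) (x : V) :
    ∃ r, K ⊆ G.closedBall x r :=
  (hK.image (G.dist x)).bddAbove.imp fun _ hr v hv => hr ⟨v, hv, rfl⟩

lemma Preconnected.ncard_closedBall_succ [G.LocallyFinite] (hG : G.Preconnected) (x : V)
    (n : ℕ) : (G.closedBall x (n + 1)).ncard =
      (G.closedBall x n).ncard + (G.sphere x (n + 1)).ncard := by
  have hsplit : G.closedBall x (n + 1) = G.closedBall x n ∪ G.sphere x (n + 1) := by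
    ext v
    simp only [mem_closedBall, mem_sphere, Set.mem_union]
    omega
  rw [hsplit, Set.ncard_union_eq (Set.disjoint_left.mpr fun v hv hv' => by simp_all)
    (hG.closedBall_finite x n) (hG.sphere_finite x (n + 1))]

end Metric

section ReachableWithin

def ReachableWithin (G : SimpleGraph V) (T : Set V) (u v : V) : Prop :=
  ∃ p : G.Walk u v, ∀ y ∈ p.support, y ∈ T

namespace ReachableWithin

variable {T T' S : Set V} {a b u v w x : V}

lemma left_mem (h : G.ReachableWithin T u v) : u ∈ T :=
  h.elim fun p hp => hp u p.start_mem_support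

lemma right_mem (h : G.ReachableWithin T u v) : v ∈ T :=
  h.elim fun p hp => hp v p.end_mem_support

lemma refl (hu : u ∈ T) : G.ReachableWithin T u u := ⟨.nil, by simpa using hu⟩

lemma of_adj (h : G.Adj u v) (hu : u ∈ T) (hv : v ∈ T) : G.ReachableWithin T u v :=
  ⟨h.toWalk, by simp [hu, hv]⟩

lemma mono (hT : T ⊆ T') (h : G.ReachableWithin T u v) : G.ReachableWithin T' u v :=
  h.elim fun p hp => ⟨p, fun y hy => hT (hp y hy)⟩

lemma symm (h : G.ReachableWithin T u v) : G.ReachableWithin T v u :=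
  h.elim fun p hp => ⟨p.reverse, fun y hy => hp y (by simpa using hy)⟩

lemma trans (h : G.ReachableWithin T u v) (h' : G.ReachableWithin T v w) :
    G.ReachableWithin T u w := by
  obtain ⟨p, hp⟩ := h
  obtain ⟨q, hq⟩ := h'
  refine ⟨p.append q, fun y hy => ?_⟩
  rcases (Walk.mem_support_append_iff p q).mp hy with hy | hy
  exacts [hp y hy, hq y hy]

lemma of_mem_support (p : G.Walk u v) (hp : ∀ y ∈ p.support, y ∈ T) (hx : x ∈ p.support) :
    G.ReachableWithin T u x := by
  classical
  exact ⟨p.takeUntil x hx, fun y hy => hp y (p.support_takeUntil_subset_support hx hy)⟩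

lemma reachable (h : G.ReachableWithin T u v) : G.Reachable u v := h.elim fun p _ => ⟨p⟩

lemma map (f : G →g G') {T' : Set V'} (hf : Set.MapsTo f T T') (h : G.ReachableWithin T u v) :
    G'.ReachableWithin T' (f u) (f v) := by
  obtain ⟨p, hp⟩ := h
  refine ⟨p.map f, fun y hy => ?_⟩
  rw [Walk.support_map, List.mem_map] at hy
  obtain ⟨y, hy, rfl⟩ := hy
  exact hf (hp y hy)

/-- Discrete intermediate value theorem: distances change by at most one along an edge. -/
lemma exists_dist_eq (h : G.ReachableWithin T a b) (ha : G.dist x a ≤ n) (hb : n ≤ G.dist x b) :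
    ∃ y ∈ T, G.dist x y = n := by
  obtain ⟨p, hp⟩ := h
  induction p with
  | nil => exact ⟨_, hp _ (by simp), le_antisymm ha hb⟩
  | @cons a a' b hadj q ih =>
    by_cases ha' : G.dist x a' ≤ n
    · exact ih ha' hb fun y hy => hp y (by simp [hy])
    · have := hadj.dist_le_dist_add_one x
      exact ⟨a, hp a (by simp), by omega⟩

lemma exists_adj_mem (h : G.ReachableWithin T a b) (ha : a ∉ S)
    (hab : ¬ G.ReachableWithin (T \ S) a b) :
    ∃ y u, G.ReachableWithin (T \ S) a y ∧ G.Adj y u ∧ u ∈ S := by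
  obtain ⟨p, hp⟩ := h
  induction p with
  | nil => exact (hab (refl ⟨hp _ (by simp), ha⟩)).elim
  | @cons a a' b hadj q ih =>
    have haT : a ∈ T \ S := ⟨hp a (by simp), ha⟩
    by_cases ha' : a' ∈ S
    · exact ⟨a, a', refl haT, hadj, ha'⟩
    have ha'T : a' ∈ T \ S := ⟨hp a' (by simp), ha'⟩
    obtain ⟨y, u, hy, hyu, hu⟩ := ih ha' (fun h => hab ((of_adj hadj haT ha'T).trans h))
      fun y hy => hp y (by simp [hy])
    exact ⟨y, u, (of_adj hadj haT ha'T).trans hy, hyu, hu⟩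

end ReachableWithin

lemma reachableWithin_univ {u v : V} : G.ReachableWithin Set.univ u v ↔ G.Reachable u v :=
  ⟨ReachableWithin.reachable, fun ⟨p⟩ => ⟨p, fun _ _ => trivial⟩⟩

lemma Reachable.reachableWithin_closedBall {x v : V} {n : ℕ} (h : G.Reachable x v)
    (hv : v ∈ G.closedBall x n) : G.ReachableWithin (G.closedBall x n) x v := by
  classical
  obtain ⟨p, hp⟩ := h.exists_walk_length_eq_dist
  exact ⟨p, fun y hy => (dist_le (p.takeUntil y hy)).trans
    (((p.length_takeUntil_le_length hy).trans hp.le).trans hv)⟩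

lemma Preconnected.exists_dist_eq [G.LocallyFinite] [Infinite V] (hG : G.Preconnected) (x : V)
    (n : ℕ) : ∃ v, G.dist x v = n := by
  obtain ⟨w, hw⟩ := (hG.closedBall_finite x n).infinite_compl.nonempty
  obtain ⟨v, -, hv⟩ := (reachableWithin_univ.mpr (hG x w)).exists_dist_eq
    (by simp : G.dist x x ≤ n) (not_le.mp (show ¬ G.dist x w ≤ n from hw)).le
  exact ⟨v, hv⟩

end ReachableWithin

section ComponentCompl

variable {K L : Set V}

lemma mem_componentComplMk_iff {v w : V} (hv : v ∉ K) :
    w ∈ G.componentComplMk hv ↔ G.ReachableWithin Kᶜ v w := by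
  constructor
  · rintro ⟨hw, hwv⟩
    obtain ⟨p⟩ := ConnectedComponent.exact hwv.symm
    have hp : ∀ y ∈ (p.map (Embedding.induce Kᶜ).toHom).support, y ∈ Kᶜ := by
      simp only [Walk.support_map, List.mem_map]
      rintro _ ⟨y, -, rfl⟩
      exact y.2
    exact ⟨_, hp⟩
  · rintro ⟨p, hp⟩
    exact ⟨hp w p.end_mem_support, (ConnectedComponent.sound ⟨p.induce Kᶜ hp⟩).symm⟩

lemma ComponentCompl.reachableWithin (C : G.ComponentCompl K) {v w : V} (hv : v ∈ C)
    (hw : w ∈ C) : G.ReachableWithin C v w := by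
  obtain ⟨hvK, rfl⟩ := hv
  obtain ⟨p, hp⟩ := (mem_componentComplMk_iff hvK).mp hw
  exact ⟨p, fun y hy =>
    (mem_componentComplMk_iff hvK).mpr (ReachableWithin.of_mem_support p hp hy)⟩

lemma ComponentCompl.subset_componentComplMk {K' : Set V} (C : G.ComponentCompl K) {v : V}
    (hv : v ∈ C) (hC : Disjoint (C : Set V) K') :
    (C : Set V) ⊆ G.componentComplMk (Set.disjoint_left.mp hC hv) := fun _ hw =>
  (mem_componentComplMk_iff _).mpr ((C.reachableWithin hv hw).mono hC.subset_compl_right)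

lemma Preconnected.closedBall_subset_componentComplMk (hG : G.Preconnected) {x : V} {n : ℕ}
    (hK : Disjoint (G.closedBall x n) K) :
    G.closedBall x n ⊆
      G.componentComplMk (Set.disjoint_left.mp hK (by simp : x ∈ G.closedBall x n)) :=
  fun _ hw => (mem_componentComplMk_iff _).mpr
    (((hG x _).reachableWithin_closedBall hw).mono hK.subset_compl_right)

lemma Preconnected.finite_componentCompl [G.LocallyFinite] (hG : G.Preconnected)
    (hK : K.Finite) : Finite (G.ComponentCompl K) := by
  have : Fact G.Preconnected := ⟨hG⟩
  have h : Finite (G.ComponentCompl (hK.toFinset : Set V)) := inferInstance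
  rwa [Set.Finite.coe_toFinset] at h

/-- Being an `ncard`, this is `0` if there are infinitely many infinite components. -/
noncomputable def numInfiniteComponents (G : SimpleGraph V) (K : Set V) : ℕ :=
  {C : G.ComponentCompl K | (C : Set V).Infinite}.ncard

lemma ComponentCompl.exists_infinite_hom_eq [G.LocallyFinite] (hG : G.Preconnected)
    (hKL : K ⊆ L) (hL : L.Finite) {D : G.ComponentCompl K} (hD : (D : Set V).Infinite) :
    ∃ C : G.ComponentCompl L, (C : Set V).Infinite ∧ C.hom hKL = D := by
  have := hG.finite_componentCompl hL
  by_contra! h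
  refine hD ((hL.union (Set.finite_iUnion fun C : {C : G.ComponentCompl L // C.hom hKL = D} =>
    Set.not_infinite.mp fun hC => h C hC C.2)).subset fun v hv => ?_)
  by_cases hvL : v ∈ L
  · exact Or.inl hvL
  · obtain ⟨hvK, hvD⟩ := hv
    exact Or.inr (Set.mem_iUnion.mpr ⟨⟨G.componentComplMk hvL, hvD⟩, G.componentComplMk_mem hvL⟩)

lemma numInfiniteComponents_mono [G.LocallyFinite] (hG : G.Preconnected) (hKL : K ⊆ L)
    (hL : L.Finite) : G.numInfiniteComponents K ≤ G.numInfiniteComponents L := by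
  have := hG.finite_componentCompl hL
  refine (Set.ncard_le_ncard (t := ComponentCompl.hom hKL '' _) (fun D hD => ?_)).trans
    (Set.ncard_image_le)
  obtain ⟨C, hC, rfl⟩ := ComponentCompl.exists_infinite_hom_eq hG hKL hL hD
  exact ⟨C, hC, rfl⟩

lemma ComponentCompl.injOn_hom_of_numInfiniteComponents_le [G.LocallyFinite]
    (hG : G.Preconnected) (hKL : K ⊆ L) (hL : L.Finite)
    (h : G.numInfiniteComponents L ≤ G.numInfiniteComponents K) :
    Set.InjOn (ComponentCompl.hom hKL) {C : G.ComponentCompl L | (C : Set V).Infinite} := by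
  have := hG.finite_componentCompl hL
  intro C hC C' hC' hCC'
  exact Set.inj_on_of_surj_on_of_ncard_le (fun C _ => C.hom hKL)
    (fun C hC => C.hom_infinite hKL hC)
    (fun D hD => by
      obtain ⟨C, hC, rfl⟩ := ComponentCompl.exists_infinite_hom_eq hG hKL hL hD
      exact ⟨C, hC, rfl⟩) h hC hC' hCC'

def Iso.componentComplEquiv (φ : G ≃g G') {K' : Set V'} (hK : ∀ v, φ v ∈ K' ↔ v ∈ K) :
    G.ComponentCompl K ≃ G'.ComponentCompl K' :=
  Iso.connectedComponentEquiv
    { toEquiv := φ.toEquiv.subtypeEquiv fun v => (hK v).not.symm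
      map_rel_iff' := φ.map_adj_iff }

lemma Iso.coe_componentComplEquiv (φ : G ≃g G') {K' : Set V'} (hK : ∀ v, φ v ∈ K' ↔ v ∈ K)
    (C : G.ComponentCompl K) : (φ.componentComplEquiv hK C : Set V') = φ '' C := by
  have key : ∀ w, φ w ∈ φ.componentComplEquiv hK C ↔ w ∈ C := fun w => by
    refine ⟨fun ⟨hw, hwC⟩ => ?_, fun ⟨hw, hwC⟩ => ⟨(hK w).not.mpr hw, hwC ▸ rfl⟩⟩
    have hw : w ∉ K := (hK w).not.mp hw
    exact ⟨hw, (φ.componentComplEquiv hK).injective hwC⟩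
  ext y
  rw [← φ.apply_symm_apply y, SetLike.mem_coe, key, φ.injective.mem_set_image, SetLike.mem_coe]

lemma Iso.numInfiniteComponents_eq (φ : G ≃g G') {K' : Set V'} (hK : ∀ v, φ v ∈ K' ↔ v ∈ K) :
    G'.numInfiniteComponents K' = G.numInfiniteComponents K := by
  rw [numInfiniteComponents, ← (φ.componentComplEquiv hK).symm.injective.injOn.ncard_image]
  rw [Equiv.image_symm_eq_preimage]
  congr 1
  ext C
  simp only [Set.mem_preimage, Set.mem_ofPred_eq, φ.coe_componentComplEquiv,
    Set.infinite_image_iff φ.injective.injOn]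

lemma Preconnected.numInfiniteComponents_closedBall_le [G.LocallyFinite] (hG : G.Preconnected)
    (x : V) (m : ℕ) :
    G.numInfiniteComponents (G.closedBall x m) ≤ (G.sphere x (m + 1)).ncard := by
  have := hG.finite_componentCompl (hG.closedBall_finite x m)
  have hmeet : ∀ C : G.ComponentCompl (G.closedBall x m), ∃ y ∈ G.sphere x (m + 1), y ∈ C := by
    refine ComponentCompl.ind fun v hv => ?_
    have hx : x ∈ G.closedBall x m := by simp
    obtain ⟨y, u, hy, hyu, hu⟩ := (reachableWithin_univ.mpr (hG v x)).exists_adj_mem hv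
      fun h => h.right_mem.2 hx
    have hyfar : m < G.dist x y := not_le.mp hy.right_mem.2
    have hynear := hyu.symm.dist_le_dist_add_one x
    refine ⟨y, by simp only [mem_closedBall, mem_sphere] at hu ⊢; omega,
      (mem_componentComplMk_iff hv).mpr (hy.mono fun z hz => hz.2)⟩
  choose f hfS hfC using hmeet
  refine (Set.ncard_le_ncard (Set.subset_univ _)).trans
    (Set.ncard_le_ncard_of_injOn f (fun C _ => hfS C) (fun C _ C' _ hCC' => ?_)
      (hG.sphere_finite x (m + 1)))
  by_contra hne
  exact Set.disjoint_left.mp (ComponentCompl.pairwise_disjoint hne) (hfC C) (hCC' ▸ hfC C')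

/-- The infinite components of `G - K` other than `C₁` and of `G - K'` other than `D₁` lift to
distinct infinite components of `G - (K ∪ K')`, because the former all lie inside `D₁`. -/
lemma Preconnected.numInfiniteComponents_add_le_union [G.LocallyFinite] (hG : G.Preconnected)
    {K' : Set V} (hK : K.Finite) (hK' : K'.Finite) (hKne : K.Nonempty)
    {C₁ : G.ComponentCompl K} {D₁ : G.ComponentCompl K'} (hC₁ : K' ⊆ C₁) (hD₁ : K ⊆ D₁) :
    G.numInfiniteComponents K + G.numInfiniteComponents K' ≤
      G.numInfiniteComponents (K ∪ K') + 2 := by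
  have := hG.finite_componentCompl hK
  have := hG.finite_componentCompl hK'
  have := hG.finite_componentCompl (hK.union hK')
  let I := {E : G.ComponentCompl (K ∪ K') | (E : Set V).Infinite}
  let H₁ := ComponentCompl.hom (G := G) (Set.subset_union_left : K ⊆ K ∪ K')
  let H₂ := ComponentCompl.hom (G := G) (Set.subset_union_right : K' ⊆ K ∪ K')
  have hsub : ∀ C : G.ComponentCompl K, C ≠ C₁ → (C : Set V) ⊆ D₁ := by
    intro C hC
    obtain ⟨⟨c, k⟩, hc, hk, hck⟩ := C.exists_adj_boundary_pair hG hKne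
    have hCK' : Disjoint (C : Set V) K' := (ComponentCompl.pairwise_disjoint hC).mono_right hC₁
    obtain ⟨hk', rfl⟩ := hD₁ hk
    rw [← G.componentComplMk_eq_of_adj _ hk' hck]
    exact C.subset_componentComplMk hc hCK'
  have hA : {C : G.ComponentCompl K | (C : Set V).Infinite} \ {C₁} ⊆
      H₁ '' (I ∩ {E | H₂ E = D₁}) := by
    rintro C ⟨hC, hCne⟩
    obtain ⟨E, hE, rfl⟩ :=
      ComponentCompl.exists_infinite_hom_eq hG Set.subset_union_left (hK.union hK') hC
    exact ⟨E, ⟨hE, (ComponentCompl.hom_eq_iff_le _ _ _).mpr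
      ((E.subset_hom _).trans (hsub _ hCne))⟩, rfl⟩
  have hB : {D : G.ComponentCompl K' | (D : Set V).Infinite} \ {D₁} ⊆
      H₂ '' (I \ {E | H₂ E = D₁}) := by
    rintro D ⟨hD, hDne⟩
    obtain ⟨E, hE, rfl⟩ :=
      ComponentCompl.exists_infinite_hom_eq hG Set.subset_union_right (hK.union hK') hD
    exact ⟨E, ⟨hE, hDne⟩, rfl⟩
  have hA' : G.numInfiniteComponents K - 1 ≤ (I ∩ {E | H₂ E = D₁}).ncard :=
    (Set.pred_ncard_le_ncard_sdiff_singleton _ C₁).trans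
      ((Set.ncard_le_ncard hA).trans Set.ncard_image_le)
  have hB' : G.numInfiniteComponents K' - 1 ≤ (I \ {E | H₂ E = D₁}).ncard :=
    (Set.pred_ncard_le_ncard_sdiff_singleton _ D₁).trans
      ((Set.ncard_le_ncard hB).trans Set.ncard_image_le)
  have hI : (I ∩ {E | H₂ E = D₁}).ncard + (I \ {E | H₂ E = D₁}).ncard =
      G.numInfiniteComponents (K ∪ K') := Set.ncard_inter_add_ncard_sdiff_eq_ncard _ _
  omega

lemma Preconnected.exists_closedBall_numInfiniteComponents_max [G.LocallyFinite]
    (hG : G.Preconnected) (o : V) {B : ℕ} (hB : ∀ K : Set V, K.Finite → G.numInfiniteComponents K ≤ B) :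
    ∃ r, ∀ K : Set V, K.Finite →
      G.numInfiniteComponents K ≤ G.numInfiniteComponents (G.closedBall o r) := by
  let S := {n | ∃ K : Set V, K.Finite ∧ G.numInfiniteComponents K = n}
  have hS : BddAbove S := ⟨B, by rintro _ ⟨K, hK, rfl⟩; exact hB K hK⟩
  obtain ⟨K₀, hK₀, hmax⟩ := Nat.sSup_mem (s := S) ⟨_, ∅, Set.finite_empty, rfl⟩ hS
  obtain ⟨r, hr⟩ := hK₀.exists_subset_closedBall (G := G) o
  refine ⟨r, fun K hK => ?_⟩
  calc G.numInfiniteComponents K ≤ sSup S := le_csSup hS ⟨K, hK, rfl⟩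
    _ = G.numInfiniteComponents K₀ := hmax.symm
    _ ≤ _ := numInfiniteComponents_mono hG hr (hG.closedBall_finite o r)

end ComponentCompl

section Ends

open CategoryTheory Opposite

variable [G.LocallyFinite] [Fact G.Preconnected] {L : Finset V}

lemma exists_end_apply_eq (hL : ∀ M : Finset V, L ⊆ M →
      G.numInfiniteComponents (M : Set V) ≤ G.numInfiniteComponents (L : Set V))
    {C₀ : G.ComponentCompl L} (hC₀ : (C₀ : Set V).Infinite) : ∃ e : G.end, e.val (op L) = C₀ := by
  classical
  have hG : G.Preconnected := Fact.out
  choose D hDinf hDhom using fun (M : Finset V) (hLM : L ⊆ M) =>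
    ComponentCompl.exists_infinite_hom_eq hG (Finset.coe_subset.mpr hLM) M.finite_toSet hC₀
  have hcompat : ∀ {M M' : Finset V} (hLM : L ⊆ M) (hMM' : M ⊆ M'),
      (D M' (hLM.trans hMM')).hom (Finset.coe_subset.mpr hMM') = D M hLM := by
    intro M M' hLM hMM'
    refine ComponentCompl.injOn_hom_of_numInfiniteComponents_le hG (Finset.coe_subset.mpr hLM)
      M.finite_toSet (hL M hLM) ((D M' _).hom_infinite _ (hDinf _ _)) (hDinf _ _) ?_
    rw [← ComponentCompl.hom_trans, hDhom, hDhom]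
  refine ⟨⟨fun K => (D (L ∪ K.unop) Finset.subset_union_left).hom
    (Finset.coe_subset.mpr Finset.subset_union_right), fun {K K'} f => ?_⟩, hDhom _ _⟩
  have hKK' : K'.unop ⊆ K.unop := le_of_op_hom f
  show ComponentCompl.hom (Finset.coe_subset.mpr hKK') ((D (L ∪ K.unop) _).hom _) =
    (D (L ∪ K'.unop) _).hom _
  rw [← ComponentCompl.hom_trans, ← hcompat Finset.subset_union_left
    (Finset.union_subset_union_right hKK'), ← ComponentCompl.hom_trans]

/-- Maximality makes the infinite lifts of an infinite component of `G - L` to any finite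
`M ⊇ L` unique, so each infinite component of `G - L` contains exactly one end. -/
theorem card_end_eq_numInfiniteComponents (hL : ∀ M : Finset V, L ⊆ M →
      G.numInfiniteComponents (M : Set V) ≤ G.numInfiniteComponents (L : Set V)) :
    Nat.card G.end = G.numInfiniteComponents (L : Set V) := by
  classical
  have hG : G.Preconnected := Fact.out
  have hsec : ∀ (e : G.end) {K M : Finset V} (h : K ⊆ M),
      (e.val (op M)).hom (Finset.coe_subset.mpr h) = e.val (op K) :=
    fun e _ _ h => e.prop (opHomOfLE h)
  have hinf : ∀ (e : G.end) (K : (Finset V)ᵒᵖ), (e.val K).supp.Infinite := fun e K =>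
    (e.val K).infinite_iff_in_all_ranges.mpr fun M h => ⟨e.val (op M), e.prop (opHomOfLE h)⟩
  let J : G.end → {C : G.ComponentCompl L | (C : Set V).Infinite} :=
    fun e => ⟨e.val (op L), hinf e _⟩
  have hJinj : J.Injective := by
    intro e e' hee'
    refine Subtype.ext (funext fun K => ?_)
    have hM : e.val (op (L ∪ K.unop)) = e'.val (op (L ∪ K.unop)) :=
      ComponentCompl.injOn_hom_of_numInfiniteComponents_le hG Finset.subset_union_left
        (L ∪ K.unop).finite_toSet (hL _ Finset.subset_union_left) (hinf e _) (hinf e' _)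
        ((hsec e Finset.subset_union_left).trans
          ((congrArg Subtype.val hee').trans (hsec e' Finset.subset_union_left).symm))
    rw [← hsec e (Finset.subset_union_right (s₁ := L)), hM, hsec e' Finset.subset_union_right]
  rw [numInfiniteComponents, ← Nat.card_coe_set_eq]
  exact Nat.card_eq_of_bijective J
    ⟨hJinj, fun ⟨_, hC₀⟩ => (exists_end_apply_eq hL hC₀).imp fun _ he => Subtype.ext he⟩

end Ends

section Detours

def HasDetours (G : SimpleGraph V) (r R L : ℕ) : Prop :=
  ∀ x u v, G.dist x u = R + 1 → G.dist x v = R + 1 →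
    G.ReachableWithin (G.closedBall x L \ G.closedBall x r) u v

namespace HasDetours

variable {r R L τ : ℕ} {T : Set V} {a b : V}

/-- Reroute a walk around the ball `B(w, R + 1)`: enter its boundary sphere for the first time,
take a detour, and leave it for the last time. -/
lemma reachableWithin_sdiff_closedBall (hdet : G.HasDetours r R L) (hr : r ≤ R + 1) {w : V}
    (hT : G.closedBall w L ⊆ T) (ha : R + 1 < G.dist w a) (hb : R + 1 < G.dist w b)
    (h : G.ReachableWithin T a b) : G.ReachableWithin (T \ G.closedBall w r) a b := by
  have hsub : T \ G.closedBall w (R + 1) ⊆ T \ G.closedBall w r :=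
    Set.sdiff_subset_sdiff_right (closedBall_mono hr)
  by_cases hab : G.ReachableWithin (T \ G.closedBall w (R + 1)) a b
  · exact hab.mono hsub
  have hsphere : ∀ {y u}, y ∉ G.closedBall w (R + 1) → G.Adj y u →
      u ∈ G.closedBall w (R + 1) → G.dist w u = R + 1 := fun {y u} hy hyu hu => by
    have := hyu.symm.dist_le_dist_add_one w
    rw [mem_closedBall] at hy hu
    omega
  have hfar : ∀ {v}, R + 1 < G.dist w v → v ∉ G.closedBall w (R + 1) := fun h => not_le.mpr h
  obtain ⟨y, u, hy, hyu, hu⟩ := h.exists_adj_mem (hfar ha) hab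
  obtain ⟨y', u', hy', hyu', hu'⟩ := h.symm.exists_adj_mem (hfar hb) fun h' => hab h'.symm
  have hd := (hdet w u u' (hsphere hy.right_mem.2 hyu hu) (hsphere hy'.right_mem.2 hyu' hu')).mono
    (Set.sdiff_subset_sdiff_left hT)
  exact (hy.mono hsub).trans <|
    (ReachableWithin.of_adj hyu (hsub hy.right_mem) hd.left_mem).trans <|
      hd.trans ((hy'.mono hsub).trans
        (ReachableWithin.of_adj hyu' (hsub hy'.right_mem) hd.right_mem)).symm

/-- A finite set `W` whose points are pairwise either `τ`-close or `(L + 2τ)`-far splits into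
clusters of radius `τ`; rerouting around the `2τ`-ball of one cluster at a time removes `W`. -/
lemma reachableWithin_sdiff_of_clustered (hdet : G.HasDetours (2 * τ) R L) (hτ : 2 * τ ≤ R + 1)
    (hG : G.Preconnected) (W : Finset V)
    (hW : ∀ u ∈ W, ∀ v ∈ W, G.dist u v ≤ τ ∨ L + 2 * τ < G.dist u v)
    (hT : ∀ w ∈ W, G.closedBall w L ⊆ T) (ha : ∀ w ∈ W, R + 1 < G.dist w a)
    (hb : ∀ w ∈ W, R + 1 < G.dist w b) (h : G.ReachableWithin T a b) :
    G.ReachableWithin (T \ W) a b := by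
  classical
  induction W using Finset.strongInduction generalizing T with
  | H W ih =>
  rcases W.eq_empty_or_nonempty with rfl | ⟨w₀, hw₀⟩
  · simpa using h
  let W' := W.filter fun w => τ < G.dist w₀ w
  have hW'W : W' ⊆ W := Finset.filter_subset _ _
  have hT' : ∀ w ∈ W', G.closedBall w L ⊆ T \ G.closedBall w₀ (2 * τ) := by
    intro w hw y hy
    obtain ⟨hwW, hτw⟩ := Finset.mem_filter.mp hw
    have hfar := (hW w₀ hw₀ w hwW).resolve_left (not_le.mpr hτw)
    have := (hG w₀ y).dist_triangle_left w
    rw [mem_closedBall, dist_comm] at hy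
    exact ⟨hT w hwW (by rwa [mem_closedBall, dist_comm]), by rw [mem_closedBall]; omega⟩
  refine (ih W' (Finset.filter_ssubset.mpr ⟨w₀, hw₀, by simp⟩)
    (fun u hu v hv => hW u (hW'W hu) v (hW'W hv)) hT' (fun w hw => ha w (hW'W hw))
    (fun w hw => hb w (hW'W hw))
    (hdet.reachableWithin_sdiff_closedBall hτ (hT w₀ hw₀) (ha w₀ hw₀) (hb w₀ hw₀) h)).mono ?_
  rintro z ⟨⟨hzT, hz₀⟩, hzW'⟩
  refine ⟨hzT, fun hzW => ?_⟩
  by_cases hτz : τ < G.dist w₀ z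
  · exact hzW' (Finset.mem_filter.mpr ⟨hzW, hτz⟩)
  · exact hz₀ (by rw [mem_closedBall]; omega)

end HasDetours

end Detours

section Transitive

variable [G.LocallyFinite]

/-- Only finitely many vertices lie in finite components of `G - B(o, r)`, and transitivity makes
the resulting radius independent of the centre. -/
lemma exists_radius_mem_infinite_componentCompl (hG : G.Preconnected)
    (htrans : ∀ u v : V, ∃ φ : G ≃g G, φ u = v) (r : ℕ) :
    ∃ R, ∀ x v, R < G.dist x v →
      ∃ C : G.ComponentCompl (G.closedBall x r), (C : Set V).Infinite ∧ v ∈ C := by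
  rcases isEmpty_or_nonempty V with hV | ⟨⟨o⟩⟩
  · exact ⟨0, fun x => isEmptyElim x⟩
  have := hG.finite_componentCompl (hG.closedBall_finite o r)
  let S := {v | ∀ C : G.ComponentCompl (G.closedBall o r), v ∈ C → (C : Set V).Finite}
  have hS : S.Finite := by
    refine ((hG.closedBall_finite o r).union (Set.finite_iUnion
      fun C : {C : G.ComponentCompl (G.closedBall o r) // (C : Set V).Finite} => C.2)).subset
      fun v hv => ?_
    by_cases hvo : v ∈ G.closedBall o r
    · exact Or.inl hvo
    · exact Or.inr (Set.mem_iUnion.mpr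
        ⟨⟨_, hv _ (G.componentComplMk_mem hvo)⟩, G.componentComplMk_mem hvo⟩)
  obtain ⟨R, hR⟩ := (hS.image (G.dist o)).bddAbove
  refine ⟨R, fun x v hv => ?_⟩
  obtain ⟨φ, rfl⟩ := htrans o x
  have hfar : φ.symm v ∉ S := fun h => by
    have := hR ⟨_, h, rfl⟩
    rw [← φ.dist_eq, φ.apply_symm_apply] at this
    omega
  simp only [S, Set.mem_ofPred_eq, not_forall, Set.not_finite] at hfar
  obtain ⟨C, hvC, hC⟩ := hfar
  have hK : ∀ w, φ w ∈ G.closedBall (φ o) r ↔ w ∈ G.closedBall o r :=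
    fun _ => φ.apply_mem_closedBall_iff
  refine ⟨φ.componentComplEquiv hK C, ?_, ?_⟩
  · rw [φ.coe_componentComplEquiv]
    exact hC.image φ.injective.injOn
  · rw [← SetLike.mem_coe, φ.coe_componentComplEquiv, ← φ.apply_symm_apply v]
    exact Set.mem_image_of_mem φ hvC

lemma exists_hasDetours (hG : G.Preconnected) (htrans : ∀ u v : V, ∃ φ : G ≃g G, φ u = v)
    (hone : ∀ K : Set V, K.Finite → G.numInfiniteComponents K ≤ 1) (r : ℕ) :
    ∃ R L, r ≤ R ∧ G.HasDetours r R L := by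
  classical
  rcases isEmpty_or_nonempty V with hV | ⟨⟨o⟩⟩
  · exact ⟨r, 0, le_rfl, fun x => isEmptyElim x⟩
  obtain ⟨R, hR⟩ := exists_radius_mem_infinite_componentCompl hG htrans r
  have hball := hG.closedBall_finite o r
  have := hG.finite_componentCompl hball
  have hpair : ∀ u ∈ G.sphere o (max r R + 1), ∀ v ∈ G.sphere o (max r R + 1),
      ∀ᶠ L in Filter.atTop, G.ReachableWithin (G.closedBall o L \ G.closedBall o r) u v := by
    intro u hu v hv
    obtain ⟨C, hC, huC⟩ := hR o u (by simp only [mem_sphere] at hu; omega)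
    obtain ⟨D, hD, hvD⟩ := hR o v (by simp only [mem_sphere] at hv; omega)
    obtain rfl : C = D := (Set.ncard_le_one_iff).mp (hone _ hball) hC hD
    obtain ⟨p, hp⟩ := C.reachableWithin huC hvD
    obtain ⟨L, hL⟩ := p.support.toFinset.finite_toSet.exists_subset_closedBall (G := G) o
    filter_upwards [Filter.eventually_ge_atTop L] with L' hL'
    exact ⟨p, fun y hy => ⟨closedBall_mono hL' (hL (List.mem_toFinset.mpr hy)),
      ComponentCompl.notMem_of_mem (hp y hy)⟩⟩
  have hsph := hG.sphere_finite o (max r R + 1)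
  obtain ⟨L, hL⟩ := ((Filter.eventually_all_finite hsph).mpr fun u hu =>
    (Filter.eventually_all_finite hsph).mpr (hpair u hu)).exists
  refine ⟨max r R, L, le_max_left r R, fun x u v hu hv => ?_⟩
  obtain ⟨φ, rfl⟩ := htrans o x
  have hmaps : Set.MapsTo φ (G.closedBall o L \ G.closedBall o r)
      (G.closedBall (φ o) L \ G.closedBall (φ o) r) := fun y hy => by
    simpa only [Set.mem_sdiff, φ.apply_mem_closedBall_iff] using hy
  have hsymm : ∀ w, G.dist (φ o) w = max r R + 1 → φ.symm w ∈ G.sphere o (max r R + 1) :=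
    fun w hw => by rw [mem_sphere, ← φ.dist_eq, φ.apply_symm_apply, hw]
  simpa using (hL _ (hsymm u hu) _ (hsymm v hv)).map φ.toHom hmaps

/-- A ball and a disjoint translate of it have `N` infinite complementary components each, and
together they have at least `2N - 2`; if `N` is maximal this forces `N ≤ 2`. -/
theorem numInfiniteComponents_closedBall_le_two [Infinite V] (hG : G.Preconnected)
    (htrans : ∀ u v : V, ∃ φ : G ≃g G, φ u = v) {o : V} {r : ℕ}
    (hr : ∀ K : Set V, K.Finite →
      G.numInfiniteComponents K ≤ G.numInfiniteComponents (G.closedBall o r)) :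
    G.numInfiniteComponents (G.closedBall o r) ≤ 2 := by
  obtain ⟨x, hx⟩ := hG.exists_dist_eq o (2 * r + 1)
  obtain ⟨φ, rfl⟩ := htrans o x
  have hdisj : Disjoint (G.closedBall o r) (G.closedBall (φ o) r) :=
    Set.disjoint_left.mpr fun y hyo hyx => by
      have := (hG o y).dist_triangle_left (φ o)
      rw [mem_closedBall] at hyo hyx
      rw [dist_comm] at hyx
      omega
  have hunion := hG.numInfiniteComponents_add_le_union (hG.closedBall_finite o r)
    (hG.closedBall_finite (φ o) r) ⟨o, by simp⟩ (hG.closedBall_subset_componentComplMk hdisj.symm)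
    (hG.closedBall_subset_componentComplMk hdisj)
  rw [φ.numInfiniteComponents_eq fun _ => φ.apply_mem_closedBall_iff] at hunion
  have := hr _ ((hG.closedBall_finite o r).union (hG.closedBall_finite (φ o) r))
  omega

end Transitive

lemma exists_gap_of_card_lt {τ : ℕ → ℕ} (hτ : Monotone τ) {D : Finset ℕ} {n : ℕ}
    (hD : D.card < n) : ∃ j < n, ∀ d ∈ D, d ≤ τ j ∨ τ (j + 1) < d := by
  by_contra! h
  choose f hfD hf using fun j : Fin n => h j j.2
  have hlt : ∀ i j : Fin n, i < j → f i ≠ f j := fun i j hij hfij => by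
    have := hτ (show (i : ℕ) + 1 ≤ j from hij)
    have := (hf i).2
    have := (hf j).1
    omega
  obtain ⟨i, j, hij, hfij⟩ := Fintype.exists_ne_map_eq_of_card_lt
    (fun j : Fin n => (⟨f j, hfD j⟩ : D)) (by simpa using hD)
  rcases hij.lt_or_gt with hij | hij
  exacts [hlt i j hij (congrArg Subtype.val hfij), hlt j i hij (congrArg Subtype.val hfij).symm]

section LinearGrowth

variable [G.LocallyFinite] {o : V} {c : ℕ}

lemma exists_small_sphere (hG : G.Preconnected) (hc : ∀ n, (G.closedBall o n).ncard ≤ c * n + c)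
    {m : ℕ} (hm : c < m) : ∃ ρ, 2 * m < ρ ∧ ρ ≤ 4 * m ∧ (G.sphere o ρ).ncard ≤ 2 * c := by
  by_contra! h
  have hgrow : ∀ k ≤ 2 * m, (2 * c + 1) * k ≤ (G.closedBall o (2 * m + k)).ncard := by
    intro k hk
    induction k with
    | zero => simp
    | succ k ih =>
      rw [← add_assoc, hG.ncard_closedBall_succ]
      have := h (2 * m + k + 1) (by omega) (by omega)
      have := ih (by omega)
      linarith
  have := (hgrow (2 * m) le_rfl).trans (hc _)
  nlinarith

lemma numInfiniteComponents_le_of_linearGrowth (hG : G.Preconnected)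
    (hc : ∀ n, (G.closedBall o n).ncard ≤ c * n + c) {K : Set V} (hK : K.Finite) :
    G.numInfiniteComponents K ≤ 2 * c := by
  obtain ⟨n, hn⟩ := hK.exists_subset_closedBall (G := G) o
  obtain ⟨ρ, hρ, -, hsmall⟩ := exists_small_sphere hG hc (lt_max_of_lt_left (lt_add_one c) :
    c < max (c + 1) n)
  obtain ⟨ρ, rfl⟩ : ∃ ρ', ρ = ρ' + 1 := ⟨ρ - 1, by omega⟩
  calc G.numInfiniteComponents K ≤ G.numInfiniteComponents (G.closedBall o ρ) :=
        numInfiniteComponents_mono hG (hn.trans (closedBall_mono (by omega)))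
          (hG.closedBall_finite o ρ)
    _ ≤ 2 * c := (hG.numInfiniteComponents_closedBall_le o ρ).trans hsmall

/-- Iterating `τ ↦ R(2τ) + L(2τ) + 2τ + 2` gives `4c² + 1` scales; a small sphere `W` (at most
`2c` points, so at most `4c²` distances) is clustered at one of them, and the clusters can be
bypassed, so `W` would not separate its inside from its outside. -/
theorem not_forall_hasDetours [Infinite V] (hG : G.Preconnected)
    (hc : ∀ n, (G.closedBall o n).ncard ≤ c * n + c) :
    ¬ ∀ r, ∃ R L, r ≤ R ∧ G.HasDetours r R L := by
  intro hdet
  choose R L hRr hRL using hdet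
  let τ : ℕ → ℕ := fun j => (fun t => R (2 * t) + L (2 * t) + 2 * t + 2)^[j] 0
  have hτsucc : ∀ j, τ (j + 1) = R (2 * τ j) + L (2 * τ j) + 2 * τ j + 2 :=
    fun j => Function.iterate_succ_apply' _ j 0
  have hτ : Monotone τ := monotone_nat_of_le_succ fun j => by rw [hτsucc]; omega
  let N := 4 * c * c + 1
  obtain ⟨ρ, hρ, hρ', hsmall⟩ := exists_small_sphere hG hc (m := c + 1 + τ N) (by omega)
  let W := (hG.sphere_finite o ρ).toFinset
  have hmemW : ∀ {w}, w ∈ W ↔ G.dist o w = ρ := by simp [W]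
  have hdist : ((W ×ˢ W).image fun p => G.dist p.1 p.2).card < N := by
    have hW : W.card ≤ 2 * c := by
      rwa [Set.ncard_eq_toFinset_card _ (hG.sphere_finite o ρ)] at hsmall
    have := Finset.card_image_le (s := W ×ˢ W) (f := fun p => G.dist p.1 p.2)
    rw [Finset.card_product] at this
    have := Nat.mul_le_mul hW hW
    have : 2 * c * (2 * c) = 4 * c * c := by ring
    omega
  obtain ⟨j, hjN, hgap⟩ := exists_gap_of_card_lt hτ hdist
  have hτj : τ (j + 1) ≤ τ N := hτ hjN
  rw [hτsucc] at hτj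
  obtain ⟨b, hb⟩ := hG.exists_dist_eq o (6 * (c + 1 + τ N))
  have hcross := (hRL (2 * τ j)).reachableWithin_sdiff_of_clustered ((hRr _).trans le_self_add)
    hG W (fun u hu v hv => by
      have := hgap (G.dist u v) (Finset.mem_image.mpr ⟨(u, v), Finset.mk_mem_product hu hv, rfl⟩)
      rw [hτsucc] at this
      omega)
    (fun _ _ => Set.subset_univ _)
    (fun w hw => by
      rw [dist_comm, hmemW.mp hw]
      omega)
    (fun w hw => by
      have := (hG o w).dist_triangle_left b
      rw [hmemW.mp hw] at this
      omega)
    (reachableWithin_univ.mpr (hG o b))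
  obtain ⟨y, ⟨-, hyW⟩, hy⟩ := hcross.exists_dist_eq (x := o) (n := ρ) (by simp) (by omega)
  exact hyW (hmemW.mpr hy)

theorem exists_two_le_numInfiniteComponents [Infinite V] (hG : G.Preconnected)
    (htrans : ∀ u v : V, ∃ φ : G ≃g G, φ u = v) (hc : ∀ n, (G.closedBall o n).ncard ≤ c * n + c) :
    ∃ K : Set V, K.Finite ∧ 2 ≤ G.numInfiniteComponents K := by
  by_contra! h
  exact not_forall_hasDetours hG hc
    (exists_hasDetours hG htrans fun K hK => Nat.le_of_lt_succ (h K hK))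

end LinearGrowth

end SimpleGraph

/-- a locally finite connected infinite vertex-transitive graph of linear
growth has exactly two ends. -/
theorem stmt19 {V : Type*} (G : SimpleGraph V) [∀ v, Fintype (G.neighborSet v)]
    (hconn : G.Connected) (hinf : Infinite V)
    (htrans : ∀ u v : V, ∃ φ : G ≃g G, φ u = v)
    (o : V)
    (hlin : ∃ c : ℕ, ∀ n : ℕ, {v : V | G.dist o v ≤ n}.Finite ∧
      {v : V | G.dist o v ≤ n}.ncard ≤ c * n + c) :
    Nat.card G.end = 2 := by
  obtain ⟨c, hc⟩ := hlin
  have hc' : ∀ n, (G.closedBall o n).ncard ≤ c * n + c := fun n => (hc n).2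
  have hG := hconn.preconnected
  have : Fact G.Preconnected := ⟨hG⟩
  obtain ⟨r, hr⟩ := hG.exists_closedBall_numInfiniteComponents_max o
    fun K hK => SimpleGraph.numInfiniteComponents_le_of_linearGrowth hG hc' hK
  obtain ⟨K, hK, hK2⟩ := SimpleGraph.exists_two_le_numInfiniteComponents hG htrans hc'
  have hball := hG.closedBall_finite o r
  rw [SimpleGraph.card_end_eq_numInfiniteComponents (L := hball.toFinset) fun M _ => by
    simpa using hr M M.finite_toSet, hball.coe_toFinset]
  exact le_antisymm (SimpleGraph.numInfiniteComponents_closedBall_le_two hG htrans hr)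
    (hK2.trans (hr K hK))
end
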